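/- arXiv:1203.2713 — 9 statements merged into one kernel-verified Lean document; each statement's English description precedes it below -/
import Mathlib

section
/- Let f(z) = z + \sum_{n=2}^{\infty} a_n z^n with complex coefficients a_n satisfying \sum_{n=2}^{\infty} n|a_n| \le 1. Then f defines an analytic function on the unit disk D = {z : |z| < 1}, f(z) \ne 0 for all z \in D with z \ne 0, and |f'(z) (z/f(z))^2 - 1| < 1 for all z \in D with z \ne 0; that is, f belongs to the class U. -/
/-- The class `U`: normalized analytic functions `f` on the unit disk with
`f(z)/z ≠ 0` and `|f'(z)(z/f(z))² - 1| < 1` on the disk. -/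
def ClassU (f : ℂ → ℂ) : Prop :=
  DifferentiableOn ℂ f (Metric.ball 0 1) ∧
  f 0 = 0 ∧ deriv f 0 = 1 ∧
  (∀ z ∈ Metric.ball (0 : ℂ) 1, z ≠ 0 → f z ≠ 0) ∧
  (∀ z ∈ Metric.ball (0 : ℂ) 1, z ≠ 0 → ‖deriv f z * (z / f z) ^ 2 - 1‖ < 1)

/-!
Write `f z = z + G z` with `G z = ∑ cₙ z^(n+2)`. Then
`f' z (z / f z)² - 1 = (E - G²) / f²` with `E = z² G' - 2 z G = ∑ n cₙ z^(n+3)`.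
With `M = ∑ ‖cₙ‖`, `N = ∑ n ‖cₙ‖` and `t = ‖z‖`, the numerator is at most `N t³ + M² t⁴` while
`‖f z‖ ≥ t - M t² > 0`, and `(t - M t²)² - N t³ - M² t⁴ = t² (1 - (N + 2M) t) > 0`
since `N + 2M = ∑ (n+2) ‖cₙ‖ ≤ 1`.
-/

open Metric

lemma id_add_deriv_mul_div_sq_sub_one {K : Type*} [Field K] {z G D E : K} (hf : z + G ≠ 0)
    (hE : z ^ 2 * D - 2 * z * G = E) :
    (1 + D) * (z / (z + G)) ^ 2 - 1 = (E - G ^ 2) / (z + G) ^ 2 := by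
  rw [div_pow, ← mul_div_assoc, div_sub_one (pow_ne_zero 2 hf)]
  linear_combination hE / (z + G) ^ 2

lemma sub_mul_sq_pos {t M : ℝ} (ht0 : 0 < t) (ht1 : t < 1) (hM : 2 * M ≤ 1) :
    0 < t - M * t ^ 2 := by
  nlinarith

lemma mul_cube_add_sq_lt_sq_sub {t M N : ℝ} (ht0 : 0 < t) (ht1 : t < 1)
    (hNM : N + 2 * M ≤ 1) : N * t ^ 3 + (M * t ^ 2) ^ 2 < (t - M * t ^ 2) ^ 2 := by
  nlinarith [mul_pos (pow_pos ht0 2) (by nlinarith : 0 < 1 - (N + 2 * M) * t)]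

section TailSeries

variable {c d : ℕ → ℂ} {z : ℂ}

lemma summable_mul_pow_add (hd : Summable fun n => ‖d n‖) (k : ℕ) (hz : ‖z‖ ≤ 1) :
    Summable fun n => d n * z ^ (n + k) :=
  .of_norm_bounded hd fun n => by
    rw [norm_mul, norm_pow]
    exact mul_le_of_le_one_right (norm_nonneg _) (pow_le_one₀ (norm_nonneg z) hz)

lemma norm_tsum_mul_pow_add_le (hd : Summable fun n => ‖d n‖) (k : ℕ) (hz : ‖z‖ ≤ 1) :
    ‖∑' n, d n * z ^ (n + k)‖ ≤ (∑' n, ‖d n‖) * ‖z‖ ^ k :=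
  tsum_of_norm_bounded (hd.hasSum.mul_right _) fun n => by
    rw [norm_mul, norm_pow]
    exact mul_le_mul_of_nonneg_left (pow_le_pow_of_le_one (norm_nonneg z) hz (by omega))
      (norm_nonneg _)

lemma summable_norm_of_summable_add_two_mul_norm
    (hsum : Summable fun n : ℕ => ((n + 2 : ℕ) : ℝ) * ‖c n‖) : Summable fun n => ‖c n‖ :=
  hsum.of_nonneg_of_le (fun n => norm_nonneg _) fun n =>
    le_mul_of_one_le_left (norm_nonneg _) (by norm_cast; omega)

lemma summable_mul_norm_of_summable_add_two_mul_norm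
    (hsum : Summable fun n : ℕ => ((n + 2 : ℕ) : ℝ) * ‖c n‖) :
    Summable fun n : ℕ => (n : ℝ) * ‖c n‖ :=
  hsum.of_nonneg_of_le (fun n => by positivity) fun n =>
    mul_le_mul_of_nonneg_right (by norm_cast; omega) (norm_nonneg _)

lemma tsum_mul_norm_add_two_mul_tsum_norm
    (hsum : Summable fun n : ℕ => ((n + 2 : ℕ) : ℝ) * ‖c n‖) :
    ∑' n : ℕ, (n : ℝ) * ‖c n‖ + 2 * ∑' n, ‖c n‖ = ∑' n : ℕ, ((n + 2 : ℕ) : ℝ) * ‖c n‖ := by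
  rw [← tsum_mul_left, ← (summable_mul_norm_of_summable_add_two_mul_norm hsum).tsum_add
    ((summable_norm_of_summable_add_two_mul_norm hsum).mul_left 2)]
  exact tsum_congr fun n => by push_cast; ring

lemma hasDerivAt_tsum_mul_pow_add_two
    (hsum : Summable fun n : ℕ => ((n + 2 : ℕ) : ℝ) * ‖c n‖) (hz : z ∈ ball (0 : ℂ) 1) :
    HasDerivAt (fun w => ∑' n, c n * w ^ (n + 2))
      (∑' n, ((n + 2 : ℕ) : ℂ) * c n * z ^ (n + 1)) z := by
  refine hasDerivAt_tsum_of_isPreconnected (g := fun n w => c n * w ^ (n + 2))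
    (g' := fun n w => ((n + 2 : ℕ) : ℂ) * c n * w ^ (n + 1)) hsum isOpen_ball
    (convex_ball 0 1).isPreconnected
    (fun n w _ => ?_) (fun n w hw => ?_) (mem_ball_self one_pos) ?_ hz
  · exact ((hasDerivAt_pow (n + 2) w).const_mul (c n)).congr_deriv (by push_cast; ring)
  · rw [mem_ball_zero_iff] at hw
    rw [norm_mul, norm_mul, norm_pow, Complex.norm_natCast]
    exact mul_le_of_le_one_right (by positivity) (pow_le_one₀ (norm_nonneg w) hw.le)
  · simp

lemma sq_mul_tsum_deriv_sub_two_mul_tsum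
    (hsum : Summable fun n : ℕ => ((n + 2 : ℕ) : ℝ) * ‖c n‖) (hz : ‖z‖ ≤ 1) :
    z ^ 2 * ∑' n, ((n + 2 : ℕ) : ℂ) * c n * z ^ (n + 1) - 2 * z * ∑' n, c n * z ^ (n + 2) =
      ∑' n : ℕ, (n : ℂ) * c n * z ^ (n + 3) := by
  have hderiv : Summable fun n => ((n + 2 : ℕ) : ℂ) * c n * z ^ (n + 1) :=
    summable_mul_pow_add (by simpa only [norm_mul, Complex.norm_natCast] using hsum) 1 hz
  have hval := summable_mul_pow_add (summable_norm_of_summable_add_two_mul_norm hsum) 2 hz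
  rw [← tsum_mul_left, ← tsum_mul_left, ← (hderiv.mul_left _).tsum_sub (hval.mul_left _)]
  exact tsum_congr fun n => by push_cast; ring

lemma sub_mul_sq_le_norm_add_tsum (hc : Summable fun n => ‖c n‖) (hz : ‖z‖ ≤ 1) :
    ‖z‖ - (∑' n, ‖c n‖) * ‖z‖ ^ 2 ≤ ‖z + ∑' n, c n * z ^ (n + 2)‖ :=
  (sub_le_sub_left (norm_tsum_mul_pow_add_le hc 2 hz) _).trans (norm_sub_le_norm_add _ _)

lemma two_mul_tsum_norm_le_one (hsum : Summable fun n : ℕ => ((n + 2 : ℕ) : ℝ) * ‖c n‖)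
    (hle : ∑' n : ℕ, ((n + 2 : ℕ) : ℝ) * ‖c n‖ ≤ 1) : 2 * ∑' n, ‖c n‖ ≤ 1 := by
  have hN : 0 ≤ ∑' n : ℕ, (n : ℝ) * ‖c n‖ := tsum_nonneg fun n => by positivity
  linarith [tsum_mul_norm_add_two_mul_tsum_norm hsum]

lemma id_add_tsum_ne_zero (hsum : Summable fun n : ℕ => ((n + 2 : ℕ) : ℝ) * ‖c n‖)
    (hle : ∑' n : ℕ, ((n + 2 : ℕ) : ℝ) * ‖c n‖ ≤ 1) (hz : ‖z‖ < 1) (hz0 : z ≠ 0) :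
    z + ∑' n, c n * z ^ (n + 2) ≠ 0 :=
  norm_pos_iff.mp <| (sub_mul_sq_pos (norm_pos_iff.mpr hz0) hz
    (two_mul_tsum_norm_le_one hsum hle)).trans_le
    (sub_mul_sq_le_norm_add_tsum (summable_norm_of_summable_add_two_mul_norm hsum) hz.le)

lemma norm_one_add_tsum_mul_div_sq_sub_one_lt
    (hsum : Summable fun n : ℕ => ((n + 2 : ℕ) : ℝ) * ‖c n‖)
    (hle : ∑' n : ℕ, ((n + 2 : ℕ) : ℝ) * ‖c n‖ ≤ 1) (hz : ‖z‖ < 1) (hz0 : z ≠ 0) :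
    ‖(1 + ∑' n, ((n + 2 : ℕ) : ℂ) * c n * z ^ (n + 1)) *
      (z / (z + ∑' n, c n * z ^ (n + 2))) ^ 2 - 1‖ < 1 := by
  set M := ∑' n, ‖c n‖
  set N := ∑' n : ℕ, (n : ℝ) * ‖c n‖
  set G := ∑' n, c n * z ^ (n + 2)
  set E := ∑' n : ℕ, (n : ℂ) * c n * z ^ (n + 3)
  have hM := summable_norm_of_summable_add_two_mul_norm hsum
  have hN : Summable fun n : ℕ => ‖(n : ℂ) * c n‖ := by
    simpa only [norm_mul, Complex.norm_natCast] using
      summable_mul_norm_of_summable_add_two_mul_norm hsum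
  have hG : ‖G‖ ≤ M * ‖z‖ ^ 2 := norm_tsum_mul_pow_add_le hM 2 hz.le
  have hE : ‖E‖ ≤ N * ‖z‖ ^ 3 := by
    simpa only [norm_mul, Complex.norm_natCast] using norm_tsum_mul_pow_add_le hN 3 hz.le
  have hpos := sub_mul_sq_pos (norm_pos_iff.mpr hz0) hz (two_mul_tsum_norm_le_one hsum hle)
  have hlow : ‖z‖ - M * ‖z‖ ^ 2 ≤ ‖z + G‖ := sub_mul_sq_le_norm_add_tsum hM hz.le
  rw [id_add_deriv_mul_div_sq_sub_one (id_add_tsum_ne_zero hsum hle hz hz0)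
    (sq_mul_tsum_deriv_sub_two_mul_tsum hsum hz.le), norm_div, norm_pow,
    div_lt_one (pow_pos (hpos.trans_le hlow) 2)]
  calc ‖E - G ^ 2‖ ≤ ‖E‖ + ‖G‖ ^ 2 := (norm_sub_le _ _).trans_eq (by rw [norm_pow])
    _ ≤ N * ‖z‖ ^ 3 + (M * ‖z‖ ^ 2) ^ 2 := by gcongr
    _ < (‖z‖ - M * ‖z‖ ^ 2) ^ 2 := mul_cube_add_sq_lt_sq_sub (norm_pos_iff.mpr hz0) hz
      ((tsum_mul_norm_add_two_mul_tsum_norm hsum).trans_le hle)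
    _ ≤ ‖z + G‖ ^ 2 := by gcongr

end TailSeries

/-- If `∑_{n≥2} n |a_n| ≤ 1`, then `f(z) = z + ∑_{n≥2} a_n zⁿ` belongs to the class `U`. -/
theorem stmt0 (a : ℕ → ℂ)
    (hsum : Summable (fun n : ℕ => ((n + 2 : ℕ) : ℝ) * ‖a (n + 2)‖))
    (hle : ∑' n : ℕ, ((n + 2 : ℕ) : ℝ) * ‖a (n + 2)‖ ≤ 1) :
    ClassU (fun z : ℂ => z + ∑' n : ℕ, a (n + 2) * z ^ (n + 2)) := by
  have hf : ∀ z ∈ ball (0 : ℂ) 1, HasDerivAt (fun w => w + ∑' n, a (n + 2) * w ^ (n + 2))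
      (1 + ∑' n, ((n + 2 : ℕ) : ℂ) * a (n + 2) * z ^ (n + 1)) z :=
    fun z hz => (hasDerivAt_id z).add (hasDerivAt_tsum_mul_pow_add_two hsum hz)
  refine ⟨fun z hz => (hf z hz).differentiableAt.differentiableWithinAt, by simp, ?_,
    fun z hz hz0 => id_add_tsum_ne_zero hsum hle (mem_ball_zero_iff.mp hz) hz0,
    fun z hz hz0 => ?_⟩
  · simp [(hf 0 (mem_ball_self one_pos)).deriv]
  · rw [(hf z hz).deriv]
    exact norm_one_add_tsum_mul_div_sq_sub_one_lt hsum hle (mem_ball_zero_iff.mp hz) hz0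
end

section
/- Let f(z) = z - \sum_{n=2}^{\infty} |a_n| z^n, where the a_n are complex numbers such that the series converges on the unit disk D and f(z)/z \ne 0 on D. If |f'(z)(z/f(z))^2 - 1| < 1 for all z \in D with z \ne 0 (i.e. f belongs to the class U), then \sum_{n=2}^{\infty} n|a_n| \le 1. -/
/-!
On the real segment `0 < r < 1` the function `f(r) = r - ∑ |aₙ| rⁿ` and its derivative
`f'(r) = 1 - ∑ n |aₙ| rⁿ⁻¹` are real, so the defining inequality of `U` reads
`|(1 - T(r)) (r / f(r))² - 1| < 1` with `T(r) = ∑ n |aₙ| rⁿ⁻¹`. A real number within distance `1`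
of `1` is positive, and `(r / f(r))² ≥ 0`, hence `T(r) < 1`. Since the coefficients are
nonnegative, letting `r → 1⁻` bounds every partial sum of `∑ n |aₙ|` by `1`.
-/

open Metric Finset Filter Set Topology

section PowerSeriesDeriv

variable {c : ℕ → ℂ} {ρ : ℝ}

theorem norm_mul_pow_add_two_le_of_mem_ball (n : ℕ) {w : ℂ} (hw : w ∈ ball (0 : ℂ) ρ) :
    ‖c n * w ^ (n + 2)‖ ≤ ‖c n‖ * ρ ^ (n + 2) := by
  rw [norm_mul, norm_pow]
  gcongr
  exact (mem_ball_zero_iff.mp hw).le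

theorem differentiableOn_mul_pow_add_two (n : ℕ) :
    DifferentiableOn ℂ (fun w => c n * w ^ (n + 2)) (ball 0 ρ) :=
  ((differentiable_id.pow _).const_mul _).differentiableOn

theorem differentiableAt_tsum_mul_pow_add_two (hc : Summable fun n => ‖c n‖ * ρ ^ (n + 2))
    {z : ℂ} (hz : ‖z‖ < ρ) :
    DifferentiableAt ℂ (fun w => ∑' n, c n * w ^ (n + 2)) z :=
  (Complex.differentiableOn_tsum_of_summable_norm hc differentiableOn_mul_pow_add_two
    isOpen_ball fun n _ => norm_mul_pow_add_two_le_of_mem_ball n).differentiableAt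
    (isOpen_ball.mem_nhds (mem_ball_zero_iff.mpr hz))

theorem hasSum_deriv_tsum_mul_pow_add_two (hc : Summable fun n => ‖c n‖ * ρ ^ (n + 2))
    {z : ℂ} (hz : ‖z‖ < ρ) :
    HasSum (fun n => ((n + 2 : ℕ) : ℂ) * c n * z ^ (n + 1))
      (deriv (fun w => ∑' n, c n * w ^ (n + 2)) z) := by
  have hterm (n : ℕ) :
      deriv (fun w => c n * w ^ (n + 2)) z = ((n + 2 : ℕ) : ℂ) * c n * z ^ (n + 1) := by
    rw [((hasDerivAt_pow (n + 2) z).const_mul (c n)).deriv, show n + 2 - 1 = n + 1 from rfl]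
    ring
  -- By the Cauchy estimates, a summable bound on the terms themselves suffices.
  simpa only [hterm] using Complex.hasSum_deriv_of_summable_norm hc
    differentiableOn_mul_pow_add_two isOpen_ball
    (fun n _ => norm_mul_pow_add_two_le_of_mem_ball n) (mem_ball_zero_iff.mpr hz)

end PowerSeriesDeriv

theorem exists_hasSum_deriv_of_eq_sub_tsum {c : ℕ → ℝ} {f : ℂ → ℂ}
    (hc : ∀ ρ ∈ Ico (0 : ℝ) 1, Summable fun n => |c n| * ρ ^ (n + 2))
    (hf : ∀ z ∈ ball (0 : ℂ) 1, f z = z - ∑' n, (c n : ℂ) * z ^ (n + 2))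
    {r : ℝ} (hr : r ∈ Ico (0 : ℝ) 1) :
    ∃ S T : ℝ, f r = ↑(r - S) ∧ deriv f r = ↑(1 - T) ∧
      HasSum (fun n => ((n + 2 : ℕ) : ℝ) * c n * r ^ (n + 1)) T := by
  have hr_norm : ‖(r : ℂ)‖ = r := by rw [Complex.norm_real, Real.norm_of_nonneg hr.1]
  have hr_ball : (r : ℂ) ∈ ball (0 : ℂ) 1 := by
    rw [mem_ball_zero_iff, hr_norm]
    exact hr.2
  have hc' : Summable fun n => ‖(c n : ℂ)‖ * ((1 + r) / 2) ^ (n + 2) := by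
    simpa only [Complex.norm_real, Real.norm_eq_abs] using
      hc _ ⟨by linarith [hr.1], by linarith [hr.2]⟩
  have hrρ : ‖(r : ℂ)‖ < (1 + r) / 2 := by linarith [hr.2]
  have hsum := hasSum_deriv_tsum_mul_pow_add_two hc' hrρ
  obtain ⟨T, hT⟩ : ∃ T : ℝ, HasSum (fun n => ((n + 2 : ℕ) : ℝ) * c n * r ^ (n + 1)) T :=
    ⟨_, (Complex.summable_ofReal.mp (by exact_mod_cast hsum.summable)).hasSum⟩
  have hT' : HasSum (fun n => ((n + 2 : ℕ) : ℂ) * c n * (r : ℂ) ^ (n + 1)) (T : ℂ) := by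
    exact_mod_cast Complex.hasSum_ofReal.mpr hT
  have hf_near : f =ᶠ[𝓝 (r : ℂ)] fun w => w - ∑' n, (c n : ℂ) * w ^ (n + 2) :=
    eventually_of_mem (isOpen_ball.mem_nhds hr_ball) hf
  refine ⟨∑' n, c n * r ^ (n + 2), T, ?_, ?_, hT⟩
  · rw [hf _ hr_ball, Complex.ofReal_sub, Complex.ofReal_tsum]
    push_cast
    rfl
  · rw [hf_near.deriv_eq, ((hasDerivAt_id' _).fun_sub
      (differentiableAt_tsum_mul_pow_add_two hc' hrρ).hasDerivAt).deriv, hsum.unique hT']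
    push_cast
    rfl

theorem pos_of_norm_mul_div_sq_sub_one_lt_one {d r u : ℝ}
    (h : ‖(d : ℂ) * ((r : ℂ) / u) ^ 2 - 1‖ < 1) : 0 < d := by
  have hreal : ‖(d : ℂ) * ((r : ℂ) / u) ^ 2 - 1‖ = |d * (r / u) ^ 2 - 1| := by
    rw [← Real.norm_eq_abs, ← Complex.norm_real]
    push_cast
    rfl
  rw [hreal, abs_sub_lt_iff] at h
  exact pos_of_mul_pos_left (by linarith) (sq_nonneg (r / u))

theorem summable_and_tsum_le_of_hasSum_mul_pow_le {b : ℕ → ℝ} (hb : ∀ n, 0 ≤ b n) {M : ℝ}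
    (k : ℕ) (h : ∀ r ∈ Ioo (0 : ℝ) 1, ∃ s ≤ M, HasSum (fun n => b n * r ^ (n + k)) s) :
    Summable b ∧ ∑' n, b n ≤ M := by
  have hpartial (N : ℕ) : ∑ n ∈ range N, b n ≤ M := by
    have hcont : Continuous fun r : ℝ => ∑ n ∈ range N, b n * r ^ (n + k) := by fun_prop
    have hlim : Tendsto (fun r : ℝ => ∑ n ∈ range N, b n * r ^ (n + k)) (𝓝[<] 1)
        (𝓝 (∑ n ∈ range N, b n)) := by
      simpa using (hcont.tendsto 1).mono_left nhdsWithin_le_nhds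
    refine le_of_tendsto hlim ?_
    filter_upwards [Ioo_mem_nhdsLT zero_lt_one] with r hr
    obtain ⟨s, hsM, hs⟩ := h r hr
    exact (sum_le_hasSum _ (fun n _ => mul_nonneg (hb n) (pow_nonneg hr.1.le _)) hs).trans hsM
  exact ⟨summable_of_sum_range_le hb hpartial, Real.tsum_le_of_sum_range_le hb hpartial⟩

theorem stmt2_general (a : ℕ → ℂ)
    (f : ℂ → ℂ)
    (hconv : ∀ z ∈ Metric.ball (0 : ℂ) 1,
      Summable (fun n : ℕ => (‖a (n + 2)‖ : ℂ) * z ^ (n + 2)))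
    (hf : ∀ z ∈ Metric.ball (0 : ℂ) 1,
      f z = z - ∑' n : ℕ, (‖a (n + 2)‖ : ℂ) * z ^ (n + 2))
    (hU : ∀ z ∈ Metric.ball (0 : ℂ) 1, z ≠ 0 →
      ‖deriv f z * (z / f z) ^ 2 - 1‖ < 1) :
    Summable (fun n : ℕ => ((n + 2 : ℕ) : ℝ) * ‖a (n + 2)‖) ∧
      ∑' n : ℕ, ((n + 2 : ℕ) : ℝ) * ‖a (n + 2)‖ ≤ 1 := by
  have hsummable : ∀ ρ ∈ Ico (0 : ℝ) 1, Summable fun n => |‖a (n + 2)‖| * ρ ^ (n + 2) := by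
    intro ρ hρ
    have hρ_ball : (ρ : ℂ) ∈ ball (0 : ℂ) 1 := by simpa [abs_of_nonneg hρ.1] using hρ.2
    simp only [abs_norm]
    exact Complex.summable_ofReal.mp (by exact_mod_cast hconv ρ hρ_ball)
  refine summable_and_tsum_le_of_hasSum_mul_pow_le (fun n => by positivity) 1 fun r hr => ?_
  obtain ⟨S, T, hfr, hderiv, hT⟩ :=
    exists_hasSum_deriv_of_eq_sub_tsum hsummable hf ⟨hr.1.le, hr.2⟩
  have hr_ball : (r : ℂ) ∈ ball (0 : ℂ) 1 := by simpa [abs_of_nonneg hr.1.le] using hr.2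
  have hU_r := hU r hr_ball (Complex.ofReal_ne_zero.mpr hr.1.ne')
  rw [hfr, hderiv] at hU_r
  exact ⟨T, by linarith [pos_of_norm_mul_div_sq_sub_one_lt_one hU_r], hT⟩

/-- If `f(z) = z - ∑_{n≥2} |a_n| zⁿ` (negative coefficients), the series converges
on the unit disk, `f(z)/z ≠ 0` there, and `f` satisfies the defining inequality of
the class `U`, then `∑_{n≥2} n |a_n| ≤ 1`. -/
theorem stmt2 (a : ℕ → ℂ)
    (f : ℂ → ℂ)
    (hconv : ∀ z ∈ Metric.ball (0 : ℂ) 1,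
      Summable (fun n : ℕ => (‖a (n + 2)‖ : ℂ) * z ^ (n + 2)))
    (hf : ∀ z ∈ Metric.ball (0 : ℂ) 1,
      f z = z - ∑' n : ℕ, (‖a (n + 2)‖ : ℂ) * z ^ (n + 2))
    (hne : ∀ z ∈ Metric.ball (0 : ℂ) 1, z ≠ 0 → f z ≠ 0)
    (hU : ∀ z ∈ Metric.ball (0 : ℂ) 1, z ≠ 0 →
      ‖deriv f z * (z / f z) ^ 2 - 1‖ < 1) :
    Summable (fun n : ℕ => ((n + 2 : ℕ) : ℝ) * ‖a (n + 2)‖) ∧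
      ∑' n : ℕ, ((n + 2 : ℕ) : ℝ) * ‖a (n + 2)‖ ≤ 1 :=
  stmt2_general a f hconv hf hU
end

section
/- Let f(z) = z - \sum_{n=2}^{\infty} |a_n| z^n, where the a_n are complex numbers such that the series converges on the unit disk D and f(z)/z \ne 0 on D. Then the following are equivalent: (i) f belongs to the class U, i.e. |f'(z)(z/f(z))^2 - 1| < 1 for all z \in D with z \ne 0; (ii) \sum_{n=2}^{\infty} n|a_n| \le 1; (iii) |f'(z) - 1| < 1 for all z \in D (f belongs to R_1). -/
/-!
Write `f z = z - g z` with `g z = ∑ cₙ z^(n+2)` and `r = |z|`. If `∑ (n+2)|cₙ| ≤ 1`, then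
`|f' z - 1| ≤ r ∑ (n+2)|cₙ| < 1`; moreover `z² f' - f² = -∑ n cₙ z^(n+3) - g²`, and with
`t = ∑ |cₙ| r^(n+2) ≥ |g z|` this gives `|z² f' - f²| ≤ ∑ n |cₙ| r^(n+3) + t² < (r - t)² ≤ |f z|²`,
which is `f ∈ U`. Conversely, for the coefficients `cₙ = |aₙ₊₂| ≥ 0`, both `f` and `f'` are real on
`(0, 1)`, and each of (i), (iii) forces `f'(r) = 1 - ∑ (n+2)|aₙ₊₂| r^(n+1) > 0` there; letting
`r → 1⁻` in the partial sums gives (ii).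
-/

open Metric Filter Set Topology

section RealCoefficients

variable {C : ℕ → ℝ}

lemma summable_mul_mul_pow_of_le (hC : ∀ n, 0 ≤ C n)
    (hB : Summable fun n => ((n + 2 : ℕ) : ℝ) * C n)
    {d : ℕ → ℝ} (hd0 : ∀ n, 0 ≤ d n) (hd : ∀ n, d n ≤ (n + 2 : ℕ))
    {r : ℝ} (hr0 : 0 ≤ r) (hr1 : r ≤ 1) (k : ℕ) :
    Summable fun n => d n * C n * r ^ (n + k) := by
  have hdC : ∀ n, 0 ≤ d n * C n := fun n => mul_nonneg (hd0 n) (hC n)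
  refine Summable.of_nonneg_of_le (fun n => mul_nonneg (hdC n) (pow_nonneg hr0 _))
    (fun n => ?_) hB
  calc d n * C n * r ^ (n + k) ≤ d n * C n :=
        mul_le_of_le_one_right (hdC n) (pow_le_one₀ hr0 hr1)
    _ ≤ ((n + 2 : ℕ) : ℝ) * C n := mul_le_mul_of_nonneg_right (hd n) (hC n)

lemma tsum_natCast_mul_mul_pow_add_le (hC : ∀ n, 0 ≤ C n)
    (hB : Summable fun n => ((n + 2 : ℕ) : ℝ) * C n) {r : ℝ} (hr0 : 0 ≤ r) (hr1 : r ≤ 1) :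
    ∑' n : ℕ, (n : ℝ) * C n * r ^ (n + 3) + 2 * r * ∑' n, C n * r ^ (n + 2)
      ≤ r ^ 3 * ∑' n, ((n + 2 : ℕ) : ℝ) * C n := by
  have hq := summable_mul_mul_pow_of_le hC hB (d := fun n => n) (fun n => n.cast_nonneg)
    (fun n => by push_cast; linarith) hr0 hr1 3
  have ht := summable_mul_mul_pow_of_le hC hB (d := fun _ => 2) (fun _ => zero_le_two)
    (fun n => by push_cast; linarith [n.cast_nonneg (α := ℝ)]) hr0 hr1 3
  have hT := summable_mul_mul_pow_of_le hC hB (d := fun n => ((n + 2 : ℕ) : ℝ))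
    (fun n => (n + 2).cast_nonneg) (fun _ => le_rfl) hr0 hr1 3
  calc ∑' n : ℕ, (n : ℝ) * C n * r ^ (n + 3) + 2 * r * ∑' n, C n * r ^ (n + 2)
      = ∑' n, ((n + 2 : ℕ) : ℝ) * C n * r ^ (n + 3) := by
        rw [← tsum_mul_left, ← hq.tsum_add (ht.congr fun n => by ring)]
        congr 1 with n
        push_cast
        ring
    _ ≤ ∑' n, r ^ 3 * (((n + 2 : ℕ) : ℝ) * C n) := by
        refine hT.tsum_le_tsum (fun n => ?_) (hB.mul_left _)
        rw [pow_add, mul_comm (r ^ n), ← mul_assoc, mul_comm _ (r ^ 3)]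
        have := hC n
        exact mul_le_of_le_one_right (by positivity) (pow_le_one₀ hr0 hr1)
    _ = r ^ 3 * ∑' n, ((n + 2 : ℕ) : ℝ) * C n := tsum_mul_left

lemma summable_and_tsum_le_of_tsum_mul_pow_le {b : ℕ → ℝ} (hb : ∀ n, 0 ≤ b n) {k : ℕ}
    {M : ℝ} (hs : ∀ r ∈ Ioo (0 : ℝ) 1, Summable fun n => b n * r ^ (n + k))
    (hM : ∀ r ∈ Ioo (0 : ℝ) 1, ∑' n, b n * r ^ (n + k) ≤ M) :
    Summable b ∧ ∑' n, b n ≤ M := by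
  have hpartial : ∀ N, ∑ n ∈ Finset.range N, b n ≤ M := by
    intro N
    have hlim : Tendsto (fun r : ℝ => ∑ n ∈ Finset.range N, b n * r ^ (n + k))
        (𝓝[<] 1) (𝓝 (∑ n ∈ Finset.range N, b n)) := by
      have : Continuous fun r : ℝ => ∑ n ∈ Finset.range N, b n * r ^ (n + k) := by fun_prop
      simpa using this.continuousWithinAt.tendsto (x := 1) (s := Iio 1)
    refine le_of_tendsto hlim ?_
    filter_upwards [Ioo_mem_nhdsLT zero_lt_one] with r hr
    exact ((hs r hr).sum_le_tsum _ fun n _ => mul_nonneg (hb n) (pow_nonneg hr.1.le _)).trans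
      (hM r hr)
  exact ⟨summable_of_sum_range_le hb hpartial, Real.tsum_le_of_sum_range_le hb hpartial⟩

lemma sub_nonneg_and_add_sq_lt_sub_sq {q r t : ℝ} (hq : 0 ≤ q) (hr0 : 0 < r) (hr1 : r < 1)
    (h : q + 2 * r * t ≤ r ^ 3) : 0 ≤ r - t ∧ q + t ^ 2 < (r - t) ^ 2 := by
  have hr3 : r ^ 3 < r ^ 2 := by nlinarith [mul_pos (mul_pos hr0 hr0) (sub_pos.2 hr1)]
  have h2t : 2 * t ≤ r ^ 2 := le_of_mul_le_mul_left (by nlinarith) hr0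
  -- `(r - t)² - (q + t²) = r² - (q + 2rt) ≥ r² - r³ > 0`
  constructor <;> nlinarith

end RealCoefficients

lemma norm_mul_div_sq_sub_one_lt_one_iff {d z w : ℂ} (hw : w ≠ 0) :
    ‖d * (z / w) ^ 2 - 1‖ < 1 ↔ ‖z ^ 2 * d - w ^ 2‖ < ‖w‖ ^ 2 := by
  have : d * (z / w) ^ 2 - 1 = (z ^ 2 * d - w ^ 2) / w ^ 2 := by field_simp
  rw [this, norm_div, norm_pow, div_lt_one (by positivity)]

section ComplexCoefficients

variable {c : ℕ → ℂ} {f : ℂ → ℂ}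

lemma summable_natCast_mul_norm_mul_pow
    (hc : ∀ z ∈ ball (0 : ℂ) 1, Summable fun n => c n * z ^ (n + 2))
    {r : ℝ} (hr0 : 0 ≤ r) (hr1 : r < 1) :
    Summable fun n => ((n + 2 : ℕ) : ℝ) * ‖c n‖ * r ^ n := by
  obtain ⟨ρ, hrρ, hρ1⟩ := exists_between hr1
  have hρ0 : 0 < ρ := hr0.trans_lt hrρ
  have hρ_mem : (ρ : ℂ) ∈ ball (0 : ℂ) 1 := by
    rwa [mem_ball_zero_iff, Complex.norm_real, Real.norm_of_nonneg hρ0.le]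
  obtain ⟨M, hM⟩ := (hc ρ hρ_mem).tendsto_atTop_zero.norm.bddAbove_range
  have hq0 : 0 ≤ r / ρ := by positivity
  have hq1 : r / ρ < 1 := (div_lt_one hρ0).2 hrρ
  have hgeom : Summable fun n : ℕ => ((n + 2 : ℕ) : ℝ) * (r / ρ) ^ n := by
    have h1 := summable_pow_mul_geometric_of_norm_lt_one 1
      (by rwa [Real.norm_of_nonneg hq0] : ‖r / ρ‖ < 1)
    have h2 := (summable_geometric_of_lt_one hq0 hq1).mul_left 2
    refine (h1.add h2).congr fun n => ?_
    push_cast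
    ring
  -- The terms `cₙ ρ^(n+2)` of a convergent series are bounded by `M`, so
  -- `(n+2)|cₙ| rⁿ ≤ (M / ρ²) (n+2) (r/ρ)ⁿ`.
  refine Summable.of_nonneg_of_le (fun n => by positivity) (fun n => ?_)
    (hgeom.mul_left (M / ρ ^ 2))
  have hMn : ‖c n‖ * ρ ^ n * ρ ^ 2 ≤ M := by
    have := hM ⟨n, rfl⟩
    simp only [norm_mul, norm_pow, Complex.norm_real, Real.norm_of_nonneg hρ0.le] at this
    rwa [mul_assoc, ← pow_add]
  have hsplit : ((n + 2 : ℕ) : ℝ) * ‖c n‖ * r ^ n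
      = ((n + 2 : ℕ) : ℝ) * (r / ρ) ^ n * (‖c n‖ * ρ ^ n) := by
    rw [div_pow]; field_simp
  rw [hsplit, mul_comm (M / ρ ^ 2)]
  gcongr
  rwa [le_div_iff₀ (by positivity)]

lemma hasDerivAt_sub_tsum_mul_pow
    (hc : ∀ z ∈ ball (0 : ℂ) 1, Summable fun n => c n * z ^ (n + 2))
    {z : ℂ} (hz : z ∈ ball (0 : ℂ) 1) :
    HasDerivAt (fun w => w - ∑' n, c n * w ^ (n + 2))
      (1 - ∑' n, ((n + 2 : ℕ) : ℂ) * c n * z ^ (n + 1)) z := by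
  rw [mem_ball_zero_iff] at hz
  obtain ⟨ρ, hzρ, hρ1⟩ := exists_between hz
  have hρ0 : 0 < ρ := (norm_nonneg z).trans_lt hzρ
  have hu := (summable_natCast_mul_norm_mul_pow hc hρ0.le hρ1).mul_left ρ
  refine (hasDerivAt_id z).sub (hasDerivAt_tsum_of_isPreconnected
    (g := fun n w => c n * w ^ (n + 2)) (g' := fun n w => ((n + 2 : ℕ) : ℂ) * c n * w ^ (n + 1))
    hu isOpen_ball
    (convex_ball (0 : ℂ) ρ).isPreconnected (fun n y _ => ?_) (fun n y hy => ?_)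
    (mem_ball_self hρ0) ?_ (mem_ball_zero_iff.2 hzρ))
  · simpa [mul_comm, mul_assoc] using (hasDerivAt_pow (n + 2) y).const_mul (c n)
  · rw [mem_ball_zero_iff] at hy
    rw [norm_mul, norm_mul, norm_pow, Complex.norm_natCast, pow_succ]
    have : ‖y‖ ^ n ≤ ρ ^ n := by gcongr
    calc ((n + 2 : ℕ) : ℝ) * ‖c n‖ * (‖y‖ ^ n * ‖y‖)
        ≤ ((n + 2 : ℕ) : ℝ) * ‖c n‖ * (ρ ^ n * ρ) := by gcongr
      _ = ρ * (((n + 2 : ℕ) : ℝ) * ‖c n‖ * ρ ^ n) := by ring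
  · simp

lemma deriv_eq_one_sub_tsum_of_eqOn_ball
    (hc : ∀ z ∈ ball (0 : ℂ) 1, Summable fun n => c n * z ^ (n + 2))
    (hf : ∀ z ∈ ball (0 : ℂ) 1, f z = z - ∑' n, c n * z ^ (n + 2))
    {z : ℂ} (hz : z ∈ ball (0 : ℂ) 1) :
    deriv f z = 1 - ∑' n, ((n + 2 : ℕ) : ℂ) * c n * z ^ (n + 1) :=
  (Filter.EventuallyEq.deriv_eq (eventually_of_mem (isOpen_ball.mem_nhds hz) hf)).trans
    (hasDerivAt_sub_tsum_mul_pow hc hz).deriv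

lemma norm_tsum_natCast_mul_mul_pow_succ_le
    (hB : Summable fun n => ((n + 2 : ℕ) : ℝ) * ‖c n‖) {z : ℂ} (hz : ‖z‖ ≤ 1) :
    ‖∑' n, ((n + 2 : ℕ) : ℂ) * c n * z ^ (n + 1)‖
      ≤ ‖z‖ * ∑' n, ((n + 2 : ℕ) : ℝ) * ‖c n‖ := by
  refine tsum_of_norm_bounded (hB.hasSum.mul_left ‖z‖) fun n => ?_
  rw [norm_mul, norm_mul, norm_pow, Complex.norm_natCast, pow_succ]
  have : ‖z‖ ^ n ≤ 1 := pow_le_one₀ (norm_nonneg z) hz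
  calc ((n + 2 : ℕ) : ℝ) * ‖c n‖ * (‖z‖ ^ n * ‖z‖)
      ≤ ((n + 2 : ℕ) : ℝ) * ‖c n‖ * (1 * ‖z‖) := by gcongr
    _ = ‖z‖ * (((n + 2 : ℕ) : ℝ) * ‖c n‖) := by ring

lemma sq_mul_one_sub_tsum_sub_sq {z : ℂ}
    (hg : Summable fun n => c n * z ^ (n + 2))
    (hg' : Summable fun n => ((n + 2 : ℕ) : ℂ) * c n * z ^ (n + 1)) :
    z ^ 2 * (1 - ∑' n, ((n + 2 : ℕ) : ℂ) * c n * z ^ (n + 1))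
        - (z - ∑' n, c n * z ^ (n + 2)) ^ 2
      = -(∑' n : ℕ, (n : ℂ) * c n * z ^ (n + 3)) - (∑' n, c n * z ^ (n + 2)) ^ 2 := by
  have key : 2 * z * ∑' n, c n * z ^ (n + 2)
      - z ^ 2 * ∑' n, ((n + 2 : ℕ) : ℂ) * c n * z ^ (n + 1)
      = -∑' n : ℕ, (n : ℂ) * c n * z ^ (n + 3) := by
    rw [← tsum_mul_left, ← tsum_mul_left, ← (hg.mul_left _).tsum_sub (hg'.mul_left _),
      ← tsum_neg]
    congr 1 with n
    push_cast
    ring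
  linear_combination key

lemma norm_sq_mul_one_sub_tsum_sub_sq_lt
    (hB : Summable fun n => ((n + 2 : ℕ) : ℝ) * ‖c n‖)
    (hB1 : ∑' n, ((n + 2 : ℕ) : ℝ) * ‖c n‖ ≤ 1) {z : ℂ} (hz0 : z ≠ 0) (hz : ‖z‖ < 1) :
    ‖z ^ 2 * (1 - ∑' n, ((n + 2 : ℕ) : ℂ) * c n * z ^ (n + 1))
        - (z - ∑' n, c n * z ^ (n + 2)) ^ 2‖
      < ‖z - ∑' n, c n * z ^ (n + 2)‖ ^ 2 := by
  set r := ‖z‖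
  have hr0 : 0 < r := norm_pos_iff.2 hz0
  have hC : ∀ n, 0 ≤ ‖c n‖ := fun n => norm_nonneg _
  have ht := summable_mul_mul_pow_of_le hC hB (d := fun _ => 1) (fun _ => zero_le_one)
    (fun n => by push_cast; linarith [n.cast_nonneg (α := ℝ)]) hr0.le hz.le 2
  have hq := summable_mul_mul_pow_of_le hC hB (d := fun n => n) (fun n => n.cast_nonneg)
    (fun n => by push_cast; linarith) hr0.le hz.le 3
  have hT := summable_mul_mul_pow_of_le hC hB (d := fun n => ((n + 2 : ℕ) : ℝ))
    (fun n => (n + 2).cast_nonneg) (fun _ => le_rfl) hr0.le hz.le 1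
  simp only [one_mul] at ht
  set t := ∑' n, ‖c n‖ * r ^ (n + 2)
  set q := ∑' n : ℕ, (n : ℝ) * ‖c n‖ * r ^ (n + 3)
  set g := ∑' n, c n * z ^ (n + 2)
  have hg : ‖g‖ ≤ t := tsum_of_norm_bounded ht.hasSum fun n => by rw [norm_mul, norm_pow]
  have hW : ‖∑' n : ℕ, (n : ℂ) * c n * z ^ (n + 3)‖ ≤ q :=
    tsum_of_norm_bounded hq.hasSum fun n => by
      rw [norm_mul, norm_mul, norm_pow, Complex.norm_natCast]
  have hqt : q + 2 * r * t ≤ r ^ 3 :=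
    (tsum_natCast_mul_mul_pow_add_le hC hB hr0.le hz.le).trans
      (mul_le_of_le_one_right (by positivity) hB1)
  obtain ⟨hrt, hlt⟩ := sub_nonneg_and_add_sq_lt_sub_sq (tsum_nonneg fun n => by positivity)
    hr0 hz hqt
  have hfz : r - t ≤ ‖z - g‖ := by linarith [norm_sub_norm_le z g]
  rw [sq_mul_one_sub_tsum_sub_sq
    (.of_norm_bounded ht fun n => by rw [norm_mul, norm_pow])
    (.of_norm_bounded hT fun n => by rw [norm_mul, norm_mul, norm_pow, Complex.norm_natCast])]
  calc ‖-(∑' n : ℕ, (n : ℂ) * c n * z ^ (n + 3)) - g ^ 2‖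
      ≤ q + t ^ 2 := by
        refine (norm_sub_le _ _).trans ?_
        rw [norm_neg, norm_pow]
        gcongr
    _ < (r - t) ^ 2 := hlt
    _ ≤ ‖z - g‖ ^ 2 := by gcongr

lemma norm_deriv_sub_one_lt_one_of_tsum_le_one
    (hc : ∀ z ∈ ball (0 : ℂ) 1, Summable fun n => c n * z ^ (n + 2))
    (hf : ∀ z ∈ ball (0 : ℂ) 1, f z = z - ∑' n, c n * z ^ (n + 2))
    (hB : Summable fun n => ((n + 2 : ℕ) : ℝ) * ‖c n‖)
    (hB1 : ∑' n, ((n + 2 : ℕ) : ℝ) * ‖c n‖ ≤ 1) {z : ℂ} (hz : z ∈ ball (0 : ℂ) 1) :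
    ‖deriv f z - 1‖ < 1 := by
  rw [deriv_eq_one_sub_tsum_of_eqOn_ball hc hf hz, sub_sub_cancel_left, norm_neg]
  rw [mem_ball_zero_iff] at hz
  exact (norm_tsum_natCast_mul_mul_pow_succ_le hB hz.le).trans_lt
    (by nlinarith [norm_nonneg z])

lemma norm_deriv_mul_div_sq_sub_one_lt_one_of_tsum_le_one
    (hc : ∀ z ∈ ball (0 : ℂ) 1, Summable fun n => c n * z ^ (n + 2))
    (hf : ∀ z ∈ ball (0 : ℂ) 1, f z = z - ∑' n, c n * z ^ (n + 2))
    (hB : Summable fun n => ((n + 2 : ℕ) : ℝ) * ‖c n‖)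
    (hB1 : ∑' n, ((n + 2 : ℕ) : ℝ) * ‖c n‖ ≤ 1) {z : ℂ} (hz : z ∈ ball (0 : ℂ) 1)
    (hz0 : z ≠ 0) (hfz : f z ≠ 0) :
    ‖deriv f z * (z / f z) ^ 2 - 1‖ < 1 := by
  rw [norm_mul_div_sq_sub_one_lt_one_iff hfz, deriv_eq_one_sub_tsum_of_eqOn_ball hc hf hz,
    hf z hz]
  exact norm_sq_mul_one_sub_tsum_sub_sq_lt hB hB1 hz0 (mem_ball_zero_iff.1 hz)

end ComplexCoefficients

section NonnegCoefficients

variable {C : ℕ → ℝ} {f : ℂ → ℂ}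

lemma summable_and_tsum_le_one_of_tsum_mul_pow_succ_lt_one (hC : ∀ n, 0 ≤ C n)
    (hc : ∀ z ∈ ball (0 : ℂ) 1, Summable fun n => (C n : ℂ) * z ^ (n + 2))
    (h : ∀ r ∈ Ioo (0 : ℝ) 1, ∑' n, ((n + 2 : ℕ) : ℝ) * C n * r ^ (n + 1) < 1) :
    Summable (fun n => ((n + 2 : ℕ) : ℝ) * C n) ∧ ∑' n, ((n + 2 : ℕ) : ℝ) * C n ≤ 1 := by
  refine summable_and_tsum_le_of_tsum_mul_pow_le (fun n => by have := hC n; positivity)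
    (fun r hr => ?_) fun r hr => (h r hr).le
  refine ((summable_natCast_mul_norm_mul_pow hc hr.1.le hr.2).mul_left r).congr fun n => ?_
  rw [Complex.norm_real, Real.norm_of_nonneg (hC n)]
  ring

lemma ofReal_mem_ball_of_mem_Ioo {r : ℝ} (hr : r ∈ Ioo (0 : ℝ) 1) :
    (r : ℂ) ∈ ball (0 : ℂ) 1 := by
  rw [mem_ball_zero_iff, Complex.norm_real, Real.norm_of_nonneg hr.1.le]
  exact hr.2

lemma deriv_ofReal_eq_of_eqOn_ball
    (hc : ∀ z ∈ ball (0 : ℂ) 1, Summable fun n => (C n : ℂ) * z ^ (n + 2))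
    (hf : ∀ z ∈ ball (0 : ℂ) 1, f z = z - ∑' n, (C n : ℂ) * z ^ (n + 2))
    {r : ℝ} (hr : r ∈ Ioo (0 : ℝ) 1) :
    deriv f r = ((1 - ∑' n, ((n + 2 : ℕ) : ℝ) * C n * r ^ (n + 1) : ℝ) : ℂ) := by
  rw [deriv_eq_one_sub_tsum_of_eqOn_ball hc hf (ofReal_mem_ball_of_mem_Ioo hr)]
  push_cast [Complex.ofReal_tsum]
  rfl

lemma tsum_lt_one_of_norm_deriv_sub_one_lt_one
    (hc : ∀ z ∈ ball (0 : ℂ) 1, Summable fun n => (C n : ℂ) * z ^ (n + 2))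
    (hf : ∀ z ∈ ball (0 : ℂ) 1, f z = z - ∑' n, (C n : ℂ) * z ^ (n + 2))
    (hR : ∀ z ∈ ball (0 : ℂ) 1, ‖deriv f z - 1‖ < 1) {r : ℝ} (hr : r ∈ Ioo (0 : ℝ) 1) :
    ∑' n, ((n + 2 : ℕ) : ℝ) * C n * r ^ (n + 1) < 1 := by
  have h := hR r (ofReal_mem_ball_of_mem_Ioo hr)
  rw [deriv_ofReal_eq_of_eqOn_ball hc hf hr] at h
  norm_cast at h
  rw [Real.norm_eq_abs, abs_lt] at h
  linarith [h.1]

lemma tsum_lt_one_of_norm_deriv_mul_div_sq_sub_one_lt_one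
    (hc : ∀ z ∈ ball (0 : ℂ) 1, Summable fun n => (C n : ℂ) * z ^ (n + 2))
    (hf : ∀ z ∈ ball (0 : ℂ) 1, f z = z - ∑' n, (C n : ℂ) * z ^ (n + 2))
    (hne : ∀ z ∈ ball (0 : ℂ) 1, z ≠ 0 → f z ≠ 0)
    (hU : ∀ z ∈ ball (0 : ℂ) 1, z ≠ 0 → ‖deriv f z * (z / f z) ^ 2 - 1‖ < 1)
    {r : ℝ} (hr : r ∈ Ioo (0 : ℝ) 1) :
    ∑' n, ((n + 2 : ℕ) : ℝ) * C n * r ^ (n + 1) < 1 := by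
  have hr' := ofReal_mem_ball_of_mem_Ioo hr
  have hr0 : (r : ℂ) ≠ 0 := by exact_mod_cast hr.1.ne'
  have h := (norm_mul_div_sq_sub_one_lt_one_iff (hne _ hr' hr0)).1 (hU _ hr' hr0)
  rw [deriv_ofReal_eq_of_eqOn_ball hc hf hr, hf _ hr'] at h
  push_cast [← Complex.ofReal_tsum] at h
  norm_cast at h
  rw [Real.norm_eq_abs, Real.norm_eq_abs, sq_abs, abs_lt] at h
  -- `|r² f'(r) - f(r)²| < f(r)²` forces `r² f'(r) > 0`.
  nlinarith [h.1, hr.1]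

end NonnegCoefficients

/-- For `f(z) = z - ∑_{n≥2} |a_n| zⁿ` with the series convergent on the unit disk and
`f(z)/z ≠ 0` there, the following are equivalent:
(i) `f ∈ U`, i.e. `|f'(z)(z/f(z))² - 1| < 1` for `z ∈ D, z ≠ 0`;
(ii) `∑_{n≥2} n |a_n| ≤ 1`;
(iii) `f ∈ R₁`, i.e. `|f'(z) - 1| < 1` on `D`. -/
theorem stmt3 (a : ℕ → ℂ)
    (f : ℂ → ℂ)
    (hconv : ∀ z ∈ Metric.ball (0 : ℂ) 1,
      Summable (fun n : ℕ => (‖a (n + 2)‖ : ℂ) * z ^ (n + 2)))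
    (hf : ∀ z ∈ Metric.ball (0 : ℂ) 1,
      f z = z - ∑' n : ℕ, (‖a (n + 2)‖ : ℂ) * z ^ (n + 2))
    (hne : ∀ z ∈ Metric.ball (0 : ℂ) 1, z ≠ 0 → f z ≠ 0) :
    ((∀ z ∈ Metric.ball (0 : ℂ) 1, z ≠ 0 →
        ‖deriv f z * (z / f z) ^ 2 - 1‖ < 1) ↔
      (Summable (fun n : ℕ => ((n + 2 : ℕ) : ℝ) * ‖a (n + 2)‖) ∧
        ∑' n : ℕ, ((n + 2 : ℕ) : ℝ) * ‖a (n + 2)‖ ≤ 1)) ∧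
    ((Summable (fun n : ℕ => ((n + 2 : ℕ) : ℝ) * ‖a (n + 2)‖) ∧
        ∑' n : ℕ, ((n + 2 : ℕ) : ℝ) * ‖a (n + 2)‖ ≤ 1) ↔
      (∀ z ∈ Metric.ball (0 : ℂ) 1, ‖deriv f z - 1‖ < 1)) := by
  have hC : ∀ n, 0 ≤ ‖a (n + 2)‖ := fun n => norm_nonneg _
  have hnorm : ∀ n, ((n + 2 : ℕ) : ℝ) * ‖a (n + 2)‖
      = ((n + 2 : ℕ) : ℝ) * ‖((‖a (n + 2)‖ : ℝ) : ℂ)‖ := fun n => by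
    rw [Complex.norm_real, norm_norm]
  refine ⟨⟨fun hU => ?_, fun hB z hz hz0 => ?_⟩, ⟨fun hB z hz => ?_, fun hR => ?_⟩⟩
  · exact summable_and_tsum_le_one_of_tsum_mul_pow_succ_lt_one hC hconv fun r hr =>
      tsum_lt_one_of_norm_deriv_mul_div_sq_sub_one_lt_one hconv hf hne hU hr
  · exact norm_deriv_mul_div_sq_sub_one_lt_one_of_tsum_le_one hconv hf (hB.1.congr hnorm)
      ((tsum_congr hnorm).ge.trans hB.2) hz hz0 (hne z hz hz0)
  · exact norm_deriv_sub_one_lt_one_of_tsum_le_one hconv hf (hB.1.congr hnorm)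
      ((tsum_congr hnorm).ge.trans hB.2) hz
  · exact summable_and_tsum_le_one_of_tsum_mul_pow_succ_lt_one hC hconv fun r hr =>
      tsum_lt_one_of_norm_deriv_sub_one_lt_one hconv hf hR hr
end

section
/- Let 0 \le \alpha \le 1 and let f(z) = z + \sum_{n=2}^{\infty} a_n z^n be analytic on the unit disk D with |a_n| \le n for all n \ge 2. Define f_\alpha(z) = (1-\alpha) f(z) + \alpha \int_0^z (f(t)/t)\, dt. If 0 < r < 1 satisfies 2(1-r)^3 + (2\alpha - 1) r - 1 > 0, then Re f_\alpha'(z) > 0 for all |z| < r; consequently f_\alpha is univalent (injective) on the disk |z| < r. -/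
/-!
Writing `f_α(z) = z + ∑_{n ≥ 2} b_n zⁿ` with `b_n = ((1 - α) + α / n) a_n`, we have
`|b_n| ≤ (1 - α) n + α`, so for `|z| < r`
`|f_α'(z) - 1| ≤ ∑_{n ≥ 2} n ((1 - α) n + α) rⁿ⁻¹ = 2(1 - α)/(1 - r)³ + (2α - 1)/(1 - r)² - 1`,
and this is `< 1` exactly when `2(1 - r)³ + (2α - 1) r - 1 > 0`. Hence `Re f_α' > 0` on the
disk `|z| < r`, and a function with positive real part of the derivative on a convex domain is
injective (Noshiro–Warschawski).
-/

open Metric Set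

theorem Convex.injOn_of_re_deriv_pos {f : ℂ → ℂ} {s : Set ℂ} (hs : Convex ℝ s)
    (hf : ∀ z ∈ s, 0 < (deriv f z).re) : InjOn f s := by
  intro x hx y hy hxy
  by_contra hne
  have hd : y - x ≠ 0 := sub_ne_zero.2 (Ne.symm hne)
  set γ : ℂ → ℂ := fun w => x + w * (y - x)
  have hγ : ∀ t ∈ Icc (0 : ℝ) 1, γ t ∈ s := fun t ht => by
    simpa [γ, Complex.real_smul] using hs.add_smul_sub_mem hx hy ht
  -- `t ↦ Re ((y - x)⁻¹ f (γ t))` has derivative `Re f'(γ t) > 0` but takes equal values at `0`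
  -- and `1`, contradicting the mean value theorem.
  have hderiv : ∀ t ∈ Icc (0 : ℝ) 1,
      HasDerivAt (fun t : ℝ => ((y - x)⁻¹ * f (γ t)).re) (deriv f (γ t)).re t := by
    intro t ht
    have hfd := (differentiableAt_of_deriv_ne_zero
      (fun h => (hf _ (hγ t ht)).ne' (by rw [h, Complex.zero_re]))).hasDerivAt
    have hγd : HasDerivAt γ (y - x) t :=
      (((hasDerivAt_id (t : ℂ)).mul_const (y - x)).const_add x).congr_deriv (one_mul _)
    have := (hfd.comp (t : ℂ) hγd).const_mul (y - x)⁻¹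
    rw [mul_comm (deriv f _), ← mul_assoc, inv_mul_cancel₀ hd, one_mul] at this
    exact this.real_of_complex
  obtain ⟨t, ht, hslope⟩ := exists_hasDerivAt_eq_slope _ _ zero_lt_one
    (fun t ht => (hderiv t ht).continuousAt.continuousWithinAt)
    (fun t ht => hderiv t (Ioo_subset_Icc_self ht))
  have hγ0 : γ (0 : ℝ) = x := by simp [γ]
  have hγ1 : γ (1 : ℝ) = y := by simp [γ]
  rw [hγ0, hγ1, hxy, sub_self, zero_div] at hslope
  exact (hf _ (hγ t (Ioo_subset_Icc_self ht))).ne' hslope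

theorem re_pos_of_norm_sub_one_lt {w : ℂ} (hw : ‖w - 1‖ < 1) : 0 < w.re := by
  have h := Complex.abs_re_le_norm (w - 1)
  rw [Complex.sub_re, Complex.one_re] at h
  linarith [(abs_le.1 h).1]

theorem hasDerivAt_tsum_mul_pow_add_succ {c : ℕ → ℂ} (k : ℕ) {r : ℝ} {u : ℕ → ℝ}
    (hu : Summable u)
    (hcu : ∀ n, ∀ w ∈ ball (0 : ℂ) r, ‖((n + k + 1 : ℕ) : ℂ) * c n * w ^ (n + k)‖ ≤ u n)
    {z : ℂ} (hz : z ∈ ball (0 : ℂ) r) :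
    HasDerivAt (fun w => ∑' n, c n * w ^ (n + k + 1))
      (∑' n : ℕ, ((n + k + 1 : ℕ) : ℂ) * c n * z ^ (n + k)) z := by
  refine hasDerivAt_tsum_of_isPreconnected (g := fun n w => c n * w ^ (n + k + 1))
    (g' := fun n w => ((n + k + 1 : ℕ) : ℂ) * c n * w ^ (n + k)) hu isOpen_ball
    (convex_ball 0 r).isPreconnected (fun n w _ => ?_) hcu (mem_ball_self (pos_of_mem_ball hz))
    ?_ hz
  · exact ((hasDerivAt_pow (n + k + 1) w).const_mul (c n)).congr_deriv
      (by rw [add_tsub_cancel_right]; ring)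
  · simpa only [zero_pow (Nat.succ_ne_zero _), mul_zero] using summable_zero

theorem norm_one_sub_add_div_mul_le {α m : ℝ} (hα : α ≤ 1) (hm : 1 ≤ m) {a : ℂ}
    (ha : ‖a‖ ≤ m) : ‖((1 - (α : ℂ)) + α / m) * a‖ ≤ (1 - α) * m + α := by
  have hm0 : 0 < m := zero_lt_one.trans_le hm
  have hfactor : 0 ≤ (1 - α) + α / m := by
    rw [← mul_div_cancel_right₀ (1 - α) hm0.ne', ← add_div]
    exact div_nonneg (by nlinarith) hm0.le
  have hcast : (1 - (α : ℂ)) + α / m = (((1 - α) + α / m : ℝ) : ℂ) := by push_cast; rfl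
  calc ‖((1 - (α : ℂ)) + α / m) * a‖ = ((1 - α) + α / m) * ‖a‖ := by
        rw [norm_mul, hcast, Complex.norm_real, Real.norm_of_nonneg hfactor]
    _ ≤ ((1 - α) + α / m) * m := mul_le_mul_of_nonneg_left ha hfactor
    _ = (1 - α) * m + α := by field_simp

-- The derivative at `r` of the extremal function `z + ∑_{n ≥ 2} ((1 - α) n + α) zⁿ`.
noncomputable def extremalDeriv (α r : ℝ) : ℝ :=
  2 * (1 - α) / (1 - r) ^ 3 + (2 * α - 1) / (1 - r) ^ 2

theorem hasSum_extremalDeriv (α : ℝ) {r : ℝ} (hr : ‖r‖ < 1) :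
    HasSum (fun n : ℕ => ((n : ℝ) + 1) * ((1 - α) * ((n : ℝ) + 1) + α) * r ^ n)
      (extremalDeriv α r) := by
  have h2 := (hasSum_choose_mul_geometric_of_norm_lt_one 2 hr).mul_left (2 * (1 - α))
  have h1 := (hasSum_choose_mul_geometric_of_norm_lt_one 1 hr).mul_left (2 * α - 1)
  have h := (h2.add h1).congr_fun
    (g := fun n : ℕ => ((n : ℝ) + 1) * ((1 - α) * ((n : ℝ) + 1) + α) * r ^ n) fun n => by
      rw [Nat.cast_choose_two, Nat.choose_one_right]
      push_cast
      ring
  rwa [extremalDeriv, div_eq_mul_one_div, div_eq_mul_one_div (2 * α - 1)]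

theorem hasSum_extremalDeriv_sub_one (α : ℝ) {r : ℝ} (hr : ‖r‖ < 1) :
    HasSum (fun n : ℕ => ((n : ℝ) + 2) * ((1 - α) * ((n : ℝ) + 2) + α) * r ^ (n + 1))
      (extremalDeriv α r - 1) := by
  have h := ((hasSum_nat_add_iff' 1).2 (hasSum_extremalDeriv α hr)).congr_fun
    (g := fun n : ℕ => ((n : ℝ) + 2) * ((1 - α) * ((n : ℝ) + 2) + α) * r ^ (n + 1)) fun n => by
      push_cast
      ring
  simpa using h

theorem extremalDeriv_lt_two {α r : ℝ} (hr : r < 1)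
    (hroot : 0 < 2 * (1 - r) ^ 3 + (2 * α - 1) * r - 1) : extremalDeriv α r < 2 := by
  have hpos : 0 < 1 - r := sub_pos.2 hr
  have : extremalDeriv α r = (2 * (1 - α) + (2 * α - 1) * (1 - r)) / (1 - r) ^ 3 := by
    rw [extremalDeriv]
    field_simp
  rw [this, div_lt_iff₀ (by positivity)]
  nlinarith

theorem norm_deriv_sub_one_lt {α : ℝ} (hα1 : α ≤ 1)
    {a : ℕ → ℂ} (ha : ∀ n : ℕ, 2 ≤ n → ‖a n‖ ≤ n) {fα : ℂ → ℂ}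
    (hfα : ∀ z ∈ ball (0 : ℂ) 1,
      fα z = z + ∑' n : ℕ, ((1 - (α : ℂ)) + (α : ℂ) / ((n : ℂ) + 2)) * a (n + 2) * z ^ (n + 2))
    {r : ℝ} (hr1 : r < 1) (hroot : 0 < 2 * (1 - r) ^ 3 + (2 * α - 1) * r - 1)
    {z : ℂ} (hz : z ∈ ball (0 : ℂ) r) : ‖deriv fα z - 1‖ < 1 := by
  set c : ℕ → ℂ := fun n => ((1 - (α : ℂ)) + (α : ℂ) / ((n : ℂ) + 2)) * a (n + 2)
  have hr : ‖r‖ < 1 := by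
    rw [Real.norm_of_nonneg (pos_of_mem_ball hz).le]
    exact hr1
  have hterm : ∀ n, ∀ w ∈ ball (0 : ℂ) r, ‖((n + 1 + 1 : ℕ) : ℂ) * c n * w ^ (n + 1)‖ ≤
      ((n : ℝ) + 2) * ((1 - α) * ((n : ℝ) + 2) + α) * r ^ (n + 1) := by
    intro n w hw
    have hc : ‖c n‖ ≤ (1 - α) * ((n : ℝ) + 2) + α := by
      have := norm_one_sub_add_div_mul_le hα1 (by linarith [n.cast_nonneg (α := ℝ)])
        (show ‖a (n + 2)‖ ≤ (n : ℝ) + 2 by exact_mod_cast ha (n + 2) (by omega))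
      simpa [c] using this
    rw [norm_mul, norm_mul, norm_pow, Complex.norm_natCast,
      show ((n + 1 + 1 : ℕ) : ℝ) = (n : ℝ) + 2 by push_cast; ring]
    gcongr
    · exact mul_nonneg (by positivity) ((norm_nonneg _).trans hc)
    · exact (mem_ball_zero_iff.1 hw).le
  have htail := hasSum_extremalDeriv_sub_one α hr
  have hderiv : HasDerivAt fα
      (1 + ∑' n : ℕ, ((n + 1 + 1 : ℕ) : ℂ) * c n * z ^ (n + 1)) z := by
    refine ((hasDerivAt_id' z).add
      (hasDerivAt_tsum_mul_pow_add_succ 1 htail.summable hterm hz)).congr_of_eventuallyEq ?_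
    filter_upwards [isOpen_ball.mem_nhds hz] with w hw
    exact hfα w (ball_subset_ball hr1.le hw)
  rw [hderiv.deriv, add_sub_cancel_left]
  exact (tsum_of_norm_bounded htail fun n => hterm n z hz).trans_lt
    (by linarith [extremalDeriv_lt_two hr1 hroot])

theorem stmt4_general (α : ℝ) (hα1 : α ≤ 1)
    (a : ℕ → ℂ) (ha : ∀ n : ℕ, 2 ≤ n → ‖a n‖ ≤ n)
    (fα : ℂ → ℂ)
    (hfα : ∀ z ∈ Metric.ball (0 : ℂ) 1,
      fα z = z + ∑' n : ℕ,
        ((1 - (α : ℂ)) + (α : ℂ) / ((n : ℂ) + 2)) * a (n + 2) * z ^ (n + 2))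
    (r : ℝ) (hr1 : r < 1)
    (hroot : 0 < 2 * (1 - r) ^ 3 + (2 * α - 1) * r - 1) :
    (∀ z ∈ Metric.ball (0 : ℂ) r, 0 < (deriv fα z).re) ∧
      Set.InjOn fα (Metric.ball (0 : ℂ) r) := by
  have hre : ∀ z ∈ ball (0 : ℂ) r, 0 < (deriv fα z).re := fun z hz =>
    re_pos_of_norm_sub_one_lt (norm_deriv_sub_one_lt hα1 ha hfα hr1 hroot hz)
  exact ⟨hre, (convex_ball 0 r).injOn_of_re_deriv_pos hre⟩

/-- Let `0 ≤ α ≤ 1` and `f(z) = z + ∑_{n≥2} a_n zⁿ` with `|a_n| ≤ n`.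
For `f_α(z) = (1-α) f(z) + α ∫₀ᶻ (f(t)/t) dt = z + ∑_{n≥2} ((1-α) + α/n) a_n zⁿ`,
if `0 < r < 1` satisfies `2(1-r)³ + (2α-1)r - 1 > 0`, then `Re f_α'(z) > 0` for
`|z| < r`, and consequently `f_α` is injective on `|z| < r`. -/
theorem stmt4 (α : ℝ) (hα0 : 0 ≤ α) (hα1 : α ≤ 1)
    (a : ℕ → ℂ) (ha : ∀ n : ℕ, 2 ≤ n → ‖a n‖ ≤ n)
    (fα : ℂ → ℂ)
    (hfα : ∀ z ∈ Metric.ball (0 : ℂ) 1,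
      fα z = z + ∑' n : ℕ,
        ((1 - (α : ℂ)) + (α : ℂ) / ((n : ℂ) + 2)) * a (n + 2) * z ^ (n + 2))
    (r : ℝ) (hr0 : 0 < r) (hr1 : r < 1)
    (hroot : 0 < 2 * (1 - r) ^ 3 + (2 * α - 1) * r - 1) :
    (∀ z ∈ Metric.ball (0 : ℂ) r, 0 < (deriv fα z).re) ∧
      Set.InjOn fα (Metric.ball (0 : ℂ) r) :=
  stmt4_general α hα1 a ha fα hfα r hr1 hroot
end

section
/- Let 0 \le \alpha \le 1 and let g(z) = 2z - \alpha z/(1-z) - (1-\alpha) z/(1-z)^2 for z in the unit disk D. Then g'(z) = (2(1-z)^3 - 1 + (2\alpha - 1)z)/(1-z)^3; in particular, if r_0 \in (0,1) is a root of the equation 2(1-r)^3 + (2\alpha - 1) r - 1 = 0, then g'(r_0) = 0, so g is not univalent on any disk |z| < r with r > r_0. Moreover g(z) = z - \sum_{n=2}^{\infty} ((1-\alpha)n + \alpha) z^n has Taylor coefficients of modulus (1-\alpha)n + \alpha \le n. -/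
/-! On the real segment `g` is real-valued, with `g'(r₀) = 0` and `g''(r₀) < 0`, so `r₀` is a local
maximum of `g` restricted to `ℝ`. A continuous injective function on a real interval is strictly
monotone and has no interior local maximum, so `g` is injective on no disk of radius `r > r₀`.
The Taylor expansion comes from `∑ zⁿ = 1/(1-z)` and `∑ n zⁿ = z/(1-z)²`. -/

open Set Filter Topology

section ExtremalFn

variable {𝕜 : Type*}

def extremalFn [Field 𝕜] (a z : 𝕜) : 𝕜 :=
  2 * z - a * z / (1 - z) - (1 - a) * z / (1 - z) ^ 2

theorem hasDerivAt_extremalFn [NontriviallyNormedField 𝕜] (a : 𝕜) {z : 𝕜} (hz : z ≠ 1) :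
    HasDerivAt (extremalFn a) ((2 * (1 - z) ^ 3 - 1 + (2 * a - 1) * z) / (1 - z) ^ 3) z := by
  have hz' : 1 - z ≠ 0 := sub_ne_zero.mpr hz.symm
  have h1 : HasDerivAt (fun w : 𝕜 => 1 - w) (-1) z := (hasDerivAt_id z).const_sub 1
  refine ((((hasDerivAt_id z).const_mul 2).sub
    (((hasDerivAt_id z).const_mul a).div h1 hz')).sub
    (((hasDerivAt_id z).const_mul (1 - a)).div (h1.pow 2) (pow_ne_zero 2 hz'))).congr_deriv ?_
  simp only [Pi.pow_apply, id]
  field_simp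
  ring

theorem hasSum_sub_extremalFn [NormedField 𝕜] [CompleteSpace 𝕜] (a : 𝕜) {z : 𝕜} (hz : ‖z‖ < 1) :
    HasSum (fun n : ℕ => ((1 - a) * (n + 2) + a) * z ^ (n + 2)) (z - extremalFn a z) := by
  have hz' : 1 - z ≠ 0 := sub_ne_zero.mpr (by rintro rfl; simp at hz)
  have h := ((hasSum_coe_mul_geometric_of_norm_lt_one hz).mul_left (1 - a)).add
    ((hasSum_geometric_of_norm_lt_one hz).mul_left a)
  have hsum : z - extremalFn a z = (1 - a) * (z / (1 - z) ^ 2) + a * (1 - z)⁻¹ -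
      ∑ i ∈ Finset.range 2, ((1 - a) * (i * z ^ i) + a * z ^ i) := by
    simp only [extremalFn, Finset.sum_range_succ, Finset.sum_range_zero]
    field_simp
    ring
  rw [hsum]
  refine ((hasSum_nat_add_iff' 2).mpr h).congr_fun fun n => ?_
  push_cast
  ring

end ExtremalFn

theorem ContinuousOn.not_isLocalMax_of_injOn_Ioo {α δ : Type*} [ConditionallyCompleteLinearOrder α]
    [TopologicalSpace α] [OrderTopology α] [DenselyOrdered α] [LinearOrder δ] [TopologicalSpace δ]
    [OrderClosedTopology δ] {f : α → δ} {a b x : α} (hx : x ∈ Ioo a b)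
    (hf : ContinuousOn f (Ioo a b)) (hinj : InjOn f (Ioo a b)) : ¬ IsLocalMax f x := by
  intro hmax
  rcases hf.strictMonoOn_of_injOn_Ioo (hx.1.trans hx.2) hinj with hmono | hanti
  · have := nhdsGT_neBot_of_exists_gt ⟨b, hx.2⟩
    obtain ⟨y, hyx, hy⟩ :=
      ((hmax.filter_mono nhdsWithin_le_nhds).and (Ioo_mem_nhdsGT hx.2)).exists
    exact (hmono hx ⟨hx.1.trans hy.1, hy.2⟩ hy.1).not_ge hyx
  · have := nhdsLT_neBot_of_exists_lt ⟨a, hx.1⟩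
    obtain ⟨y, hyx, hy⟩ :=
      ((hmax.filter_mono nhdsWithin_le_nhds).and (Ioo_mem_nhdsLT hx.1)).exists
    exact (hanti ⟨hy.1, hy.2.trans hx.2⟩ hx hy.2).not_ge hyx

theorem isLocalMax_extremalFn {α r₀ : ℝ} (hα1 : α ≤ 1) (hr0 : 0 < r₀) (hr1 : r₀ < 1)
    (hroot : 2 * (1 - r₀) ^ 3 + (2 * α - 1) * r₀ - 1 = 0) : IsLocalMax (extremalFn α) r₀ := by
  have hu : 0 < 1 - r₀ := sub_pos.mpr hr1
  have hderiv : deriv (extremalFn α) =ᶠ[𝓝 r₀]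
      fun x => (2 * (1 - x) ^ 3 - 1 + (2 * α - 1) * x) / (1 - x) ^ 3 :=
    (eventually_ne_nhds hr1.ne).mono fun x hx => (hasDerivAt_extremalFn α hx).deriv
  have hderiv2 : HasDerivAt (fun x => (2 * (1 - x) ^ 3 - 1 + (2 * α - 1) * x) / (1 - x) ^ 3)
      ((2 * α - 1 - 6 * (1 - r₀) ^ 2) / (1 - r₀) ^ 3) r₀ := by
    have h1 : HasDerivAt (fun x : ℝ => 1 - x) (-1) r₀ := (hasDerivAt_id r₀).const_sub 1
    refine ((((h1.pow 3).const_mul 2).sub_const 1).add ((hasDerivAt_id r₀).const_mul _)).div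
      (h1.pow 3) (pow_ne_zero 3 hu.ne') |>.congr_deriv ?_
    simp only [Pi.add_apply, Pi.pow_apply, id]
    field_simp
    linear_combination 3 * (1 - r₀) ^ 2 * hroot
  -- `hroot` and `α ≤ 1` give `2 (1 - r₀)³ ≥ 1 - r₀`, so `6 (1 - r₀)² ≥ 3 > 2α - 1`.
  have hsq : 1 ≤ 2 * (1 - r₀) ^ 2 := by nlinarith
  refine isLocalMax_of_deriv_deriv_neg ?_ ?_ ?_
  · rw [hderiv.deriv_eq, hderiv2.deriv]
    exact div_neg_of_neg_of_pos (by linarith) (pow_pos hu 3)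
  · rw [hderiv.eq_of_nhds]
    linear_combination hroot / (1 - r₀) ^ 3
  · exact (hasDerivAt_extremalFn α hr1.ne).continuousAt

theorem Complex.ofReal_mem_ball_zero {x s : ℝ} (hx : 0 ≤ x) (hxs : x < s) :
    (x : ℂ) ∈ Metric.ball 0 s := by
  rwa [mem_ball_zero_iff, Complex.norm_real, Real.norm_of_nonneg hx]

theorem not_injOn_ball_of_eqOn_extremalFn {α r₀ : ℝ} (hα1 : α ≤ 1) (hr0 : 0 < r₀) (hr1 : r₀ < 1)
    (hroot : 2 * (1 - r₀) ^ 3 + (2 * α - 1) * r₀ - 1 = 0) {g : ℂ → ℂ}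
    (hg : EqOn g (extremalFn (α : ℂ)) (Metric.ball 0 1)) {r : ℝ} (hr : r₀ < r) :
    ¬ InjOn g (Metric.ball 0 r) := by
  intro hinj
  have hmem : ∀ x ∈ Ioo 0 (min r 1), (x : ℂ) ∈ Metric.ball 0 (min r 1) := fun x hx =>
    Complex.ofReal_mem_ball_zero hx.1.le hx.2
  have hreal : ∀ x ∈ Ioo 0 (min r 1), g x = (extremalFn α x : ℝ) := fun x hx => by
    rw [hg (Metric.ball_subset_ball (min_le_right r 1) (hmem x hx))]
    push_cast [extremalFn]
    rfl
  have hinjR : InjOn (extremalFn α) (Ioo 0 (min r 1)) := fun x hx y hy hxy => by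
    have := hinj (Metric.ball_subset_ball (min_le_left r 1) (hmem x hx))
      (Metric.ball_subset_ball (min_le_left r 1) (hmem y hy)) (by rw [hreal x hx, hreal y hy, hxy])
    exact_mod_cast this
  have hcont : ContinuousOn (extremalFn α) (Ioo 0 (min r 1)) := fun x hx =>
    (hasDerivAt_extremalFn α (hx.2.trans_le (min_le_right _ _)).ne).continuousAt.continuousWithinAt
  exact hcont.not_isLocalMax_of_injOn_Ioo ⟨hr0, lt_min hr hr1⟩ hinjR
    (isLocalMax_extremalFn hα1 hr0 hr1 hroot)

/-- For `0 ≤ α ≤ 1` and `g(z) = 2z - αz/(1-z) - (1-α)z/(1-z)²` on the unit disk: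
`g'(z) = (2(1-z)³ - 1 + (2α-1)z)/(1-z)³`; if `r₀ ∈ (0,1)` is a root of
`2(1-r)³ + (2α-1)r - 1 = 0`, then `g'(r₀) = 0`, hence `g` is not injective on any
disk `|z| < r` with `r > r₀`. Moreover `g(z) = z - ∑_{n≥2} ((1-α)n + α) zⁿ` with
coefficient moduli `(1-α)n + α ≤ n`. -/
theorem stmt5 (α : ℝ) (hα0 : 0 ≤ α) (hα1 : α ≤ 1)
    (g : ℂ → ℂ)
    (hg : ∀ z ∈ Metric.ball (0 : ℂ) 1,
      g z = 2 * z - (α : ℂ) * z / (1 - z) - (1 - (α : ℂ)) * z / (1 - z) ^ 2)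
    (r₀ : ℝ) (hr0 : 0 < r₀) (hr1 : r₀ < 1)
    (hroot : 2 * (1 - r₀) ^ 3 + (2 * α - 1) * r₀ - 1 = 0) :
    (∀ z ∈ Metric.ball (0 : ℂ) 1,
      deriv g z = (2 * (1 - z) ^ 3 - 1 + (2 * (α : ℂ) - 1) * z) / (1 - z) ^ 3) ∧
    deriv g (r₀ : ℂ) = 0 ∧
    (∀ r : ℝ, r₀ < r → ¬ Set.InjOn g (Metric.ball (0 : ℂ) r)) ∧
    (∀ z ∈ Metric.ball (0 : ℂ) 1,
      g z = z - ∑' n : ℕ, ((((1 - α) * (n + 2) + α : ℝ)) : ℂ) * z ^ (n + 2)) ∧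
    (∀ n : ℕ, 2 ≤ n → (1 - α) * n + α ≤ n) := by
  have hg' : EqOn g (extremalFn (α : ℂ)) (Metric.ball 0 1) := hg
  have hD : ∀ z ∈ Metric.ball (0 : ℂ) 1,
      deriv g z = (2 * (1 - z) ^ 3 - 1 + (2 * (α : ℂ) - 1) * z) / (1 - z) ^ 3 := fun z hz =>
    ((hasDerivAt_extremalFn _ (ne_of_mem_of_not_mem hz (by simp))).congr_of_eventuallyEq
      (hg'.eventuallyEq_of_mem (Metric.isOpen_ball.mem_nhds hz))).deriv
  refine ⟨hD, ?_, fun r hr => not_injOn_ball_of_eqOn_extremalFn hα1 hr0 hr1 hroot hg' hr,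
    fun z hz => ?_, fun n hn => ?_⟩
  · rw [hD _ (Complex.ofReal_mem_ball_zero hr0.le hr1), div_eq_zero_iff]
    left
    exact_mod_cast (by linear_combination hroot : 2 * (1 - r₀) ^ 3 - 1 + (2 * α - 1) * r₀ = 0)
  · push_cast
    rw [(hasSum_sub_extremalFn _ (mem_ball_zero_iff.mp hz)).tsum_eq, hg' hz, sub_sub_cancel]
  · have hn' : (2 : ℝ) ≤ n := by exact_mod_cast hn
    nlinarith
end

section
/- Let \phi(z) = 1 + \sum_{n=1}^{\infty} b_n z^n be analytic and non-vanishing on the unit disk D, and set f(z) = z/\phi(z). If \sum_{n=2}^{\infty} (n-1)|b_n| \le 1, then f belongs to the class U, i.e. |f'(z)(z/f(z))^2 - 1| < 1 for all z \in D with z \ne 0. -/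
open FormalMultilinearSeries Metric
open scoped ENNReal NNReal

lemma le_radius_ofScalars_of_summable {b : ℕ → ℂ} {r : ℝ≥0}
    (h : ∀ z ∈ ball (0 : ℂ) r, Summable fun n => b n * z ^ n) :
    (r : ℝ≥0∞) ≤ (ofScalars ℂ b).radius := by
  refine ENNReal.le_of_forall_nnreal_lt fun s hs => ?_
  have hs_mem : ((s : ℝ) : ℂ) ∈ ball (0 : ℂ) r := by
    simpa [abs_of_nonneg s.2] using hs
  refine (ofScalars ℂ b).le_radius_of_tendsto (l := 0) ?_
  simpa [ofScalars_norm, Complex.norm_real, abs_of_nonneg s.2] using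
    (h _ hs_mem).tendsto_atTop_zero.norm

lemma hasFPowerSeriesOnBall_ofScalars_of_hasSum {b : ℕ → ℂ} {φ : ℂ → ℂ} {r : ℝ≥0}
    (hr : 0 < r) (h : ∀ z ∈ ball (0 : ℂ) r, HasSum (fun n => b n * z ^ n) (φ z)) :
    HasFPowerSeriesOnBall φ (ofScalars ℂ b) 0 r where
  r_le := le_radius_ofScalars_of_summable fun z hz => (h z hz).summable
  r_pos := ENNReal.coe_pos.2 hr
  hasSum {y} hy := by
    simpa [ofScalars_apply_eq, mul_comm] using h y (by rwa [← eball_coe])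

namespace HasFPowerSeriesOnBall

variable {b : ℕ → ℂ} {φ : ℂ → ℂ} {r : ℝ≥0∞}

lemma hasSum_mul_deriv (hφ : HasFPowerSeriesOnBall φ (ofScalars ℂ b) 0 r) {z : ℂ}
    (hz : z ∈ eball (0 : ℂ) r) :
    HasSum (fun n => n * b n * z ^ n) (z * deriv φ z) := by
  have hfderiv := (ContinuousLinearMap.apply ℂ ℂ z).hasSum
    (hφ.fderiv.hasSum (y := z) (by simpa using hz))
  rw [zero_add, ContinuousLinearMap.apply_apply, fderiv_eq_smul_deriv, smul_eq_mul] at hfderiv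
  rw [← hasSum_nat_add_iff' 1, Finset.sum_range_one, Nat.cast_zero, zero_mul, zero_mul, sub_zero]
  refine hfderiv.congr_fun fun n => ?_
  rw [ContinuousLinearMap.apply_apply, derivSeries_apply_diag, ofScalars_apply_eq, nsmul_eq_mul,
    smul_eq_mul]
  push_cast
  ring

lemma apply_zero_eq_one (hφ : HasFPowerSeriesOnBall φ (ofScalars ℂ b) 0 r) (hb0 : b 0 = 1) :
    φ 0 = 1 := by
  rw [← hφ.coeff_zero fun _ => 0, ofScalars_apply_eq]
  simp [hb0]

lemma hasSum_sub_mul_deriv_sub_one (hφ : HasFPowerSeriesOnBall φ (ofScalars ℂ b) 0 r)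
    (hb0 : b 0 = 1) {z : ℂ} (hz : z ∈ eball (0 : ℂ) r) :
    HasSum (fun n => -(((n + 1 : ℕ) : ℂ) * b (n + 2)) * z ^ (n + 2))
      (φ z - z * deriv φ z - 1) := by
  have hφz : HasSum (fun n => b n * z ^ n) (φ z) := by
    simpa [ofScalars_apply_eq, mul_comm] using hφ.hasSum (y := z) (by simpa using hz)
  have hdiff := (hasSum_nat_add_iff' 2).2 (hφz.sub (hφ.hasSum_mul_deriv hz))
  have hhead : ∑ i ∈ Finset.range 2, (b i * z ^ i - i * b i * z ^ i) = 1 := by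
    simp [Finset.sum_range_succ, hb0]
  rw [hhead] at hdiff
  refine hdiff.congr_fun fun n => ?_
  push_cast
  ring

end HasFPowerSeriesOnBall

section

variable {𝕜 : Type*} [NontriviallyNormedField 𝕜] {φ : 𝕜 → 𝕜} {z : 𝕜}

lemma hasDerivAt_id_div (hφ : DifferentiableAt 𝕜 φ z) (hφz : φ z ≠ 0) :
    HasDerivAt (fun w => w / φ w) ((φ z - z * deriv φ z) / φ z ^ 2) z :=
  ((hasDerivAt_id' z).div hφ.hasDerivAt hφz).congr_deriv (by rw [one_mul])

lemma deriv_id_div_mul_sq_eq (hφ : DifferentiableAt 𝕜 φ z) (hφz : φ z ≠ 0) (hz : z ≠ 0) :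
    deriv (fun w => w / φ w) z * (z / (z / φ z)) ^ 2 = φ z - z * deriv φ z := by
  rw [(hasDerivAt_id_div hφ hφz).deriv]
  field_simp

end

lemma norm_le_pow_mul_tsum_of_hasSum {𝕜 : Type*} [NormedField 𝕜] {a : ℕ → 𝕜} {z s : 𝕜} {k : ℕ}
    (hs : HasSum (fun n => a n * z ^ (n + k)) s) (ha : Summable fun n => ‖a n‖) (hz : ‖z‖ ≤ 1) :
    ‖s‖ ≤ ‖z‖ ^ k * ∑' n, ‖a n‖ := by
  refine hs.norm_le_of_bounded (ha.hasSum.mul_left _) fun n => ?_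
  calc ‖a n * z ^ (n + k)‖ = ‖z‖ ^ n * (‖z‖ ^ k * ‖a n‖) := by
        rw [norm_mul, norm_pow, pow_add]
        ring
    _ ≤ ‖z‖ ^ k * ‖a n‖ := mul_le_of_le_one_left (by positivity) (pow_le_one₀ (norm_nonneg _) hz)

/-- If `φ(z) = 1 + ∑_{n≥1} b_n zⁿ` is analytic and non-vanishing on the unit disk and
`∑_{n≥2} (n-1)|b_n| ≤ 1`, then `f(z) = z/φ(z)` belongs to the class `U`. -/
theorem stmt9 (b : ℕ → ℂ) (φ : ℂ → ℂ) (hb0 : b 0 = 1)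
    (hφ : ∀ z ∈ Metric.ball (0 : ℂ) 1, HasSum (fun n : ℕ => b n * z ^ n) (φ z))
    (hφ0 : ∀ z ∈ Metric.ball (0 : ℂ) 1, φ z ≠ 0)
    (hsum : Summable (fun n : ℕ => ((n + 1 : ℕ) : ℝ) * ‖b (n + 2)‖))
    (hle : ∑' n : ℕ, ((n + 1 : ℕ) : ℝ) * ‖b (n + 2)‖ ≤ 1) :
    ClassU (fun z => z / φ z) := by
  have hφs : HasFPowerSeriesOnBall φ (ofScalars ℂ b) 0 (1 : ℝ≥0) :=
    hasFPowerSeriesOnBall_ofScalars_of_hasSum one_pos (by simpa using hφ)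
  have hball : eball (0 : ℂ) (1 : ℝ≥0) = ball 0 1 := by rw [eball_coe, NNReal.coe_one]
  have hdiff : DifferentiableOn ℂ φ (ball 0 1) := hball ▸ hφs.differentiableOn
  have hdiffAt : ∀ z ∈ ball (0 : ℂ) 1, DifferentiableAt ℂ φ z := fun z hz =>
    hdiff.differentiableAt (isOpen_ball.mem_nhds hz)
  refine ⟨differentiableOn_id.div hdiff hφ0, by simp, ?_,
    fun z hz hz0 => div_ne_zero hz0 (hφ0 z hz), fun z hz hz0 => ?_⟩
  · have h0 : (0 : ℂ) ∈ ball (0 : ℂ) 1 := by simp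
    rw [(hasDerivAt_id_div (hdiffAt 0 h0) (hφ0 0 h0)).deriv, hφs.apply_zero_eq_one hb0]
    simp
  have hz1 : ‖z‖ < 1 := mem_ball_zero_iff.1 hz
  rw [deriv_id_div_mul_sq_eq (hdiffAt z hz) (hφ0 z hz) hz0]
  have hnorm : (fun n : ℕ => ‖-(((n + 1 : ℕ) : ℂ) * b (n + 2))‖) =
      fun n => ((n + 1 : ℕ) : ℝ) * ‖b (n + 2)‖ := by
    ext n
    rw [norm_neg, norm_mul, Complex.norm_natCast]
  calc ‖φ z - z * deriv φ z - 1‖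
      ≤ ‖z‖ ^ 2 * ∑' n : ℕ, ((n + 1 : ℕ) : ℝ) * ‖b (n + 2)‖ := by
        simpa only [hnorm] using norm_le_pow_mul_tsum_of_hasSum
          (hφs.hasSum_sub_mul_deriv_sub_one hb0 (hball ▸ hz)) (hnorm ▸ hsum) hz1.le
    _ ≤ ‖z‖ ^ 2 := mul_le_of_le_one_right (by positivity) hle
    _ < 1 := pow_lt_one₀ (norm_nonneg z) hz1 two_ne_zero
end

section
/- Let \phi(z) = 1 + \sum_{n=1}^{\infty} b_n z^n be analytic and non-vanishing on the unit disk D, and set f(z) = z/\phi(z). If \sum_{n=2}^{\infty} (n-1)|b_n| \le 1 - |b_1|, then f is starlike: f is univalent on D and Re( z f'(z)/f(z) ) > 0 for all z \in D with z \ne 0. -/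
/-!
Write `z f'/f = 1 - X/φ` with `X = z φ'(z) = ∑ n bₙ zⁿ`. Since `Re w > 0 ↔ |w - 1| < |w + 1|`,
it suffices that `|X| < |2φ - X|`. Coefficientwise `n + |2 - n| = 2 max(n - 1, 1)` for `n ≥ 1`, so
`|X| + |2φ - X - 2| ≤ 2|z| (|b₁| + ∑_{n≥2} (n - 1)|bₙ|) < 2`.

For injectivity, `z₁φ(z₂) - z₂φ(z₁) = z₁ - z₂ + z₁z₂ ∑_{n≥2} bₙ (z₂ⁿ⁻¹ - z₁ⁿ⁻¹)`, and
`|z₂ⁿ⁻¹ - z₁ⁿ⁻¹| ≤ (n - 1)|z₂ - z₁|` bounds the sum by `|z₁z₂| |z₂ - z₁| < |z₂ - z₁|` unless `z₁ = z₂`.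
-/

open Metric Finset

theorem norm_pow_sub_pow_le {R : Type*} [NormedCommRing R] [NormOneClass R] {x y : R}
    (hx : ‖x‖ ≤ 1) (hy : ‖y‖ ≤ 1) (m : ℕ) : ‖x ^ m - y ^ m‖ ≤ m * ‖x - y‖ := by
  rw [← geom_sum₂_mul]
  refine (norm_mul_le _ _).trans ?_
  gcongr
  calc ‖∑ i ∈ range m, x ^ i * y ^ (m - 1 - i)‖
      ≤ ∑ i ∈ range m, ‖x ^ i * y ^ (m - 1 - i)‖ := norm_sum_le _ _
    _ ≤ ∑ _i ∈ range m, (1 : ℝ) := by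
        gcongr with i
        refine (norm_mul_le _ _).trans (mul_le_one₀ ?_ (norm_nonneg _) ?_)
        · exact (norm_pow_le x i).trans (pow_le_one₀ (norm_nonneg x) hx)
        · exact (norm_pow_le y _).trans (pow_le_one₀ (norm_nonneg y) hy)
    _ = m := by simp

theorem Complex.norm_sub_one_lt_norm_add_one_iff {w : ℂ} : ‖w - 1‖ < ‖w + 1‖ ↔ 0 < w.re := by
  rw [← pow_lt_pow_iff_left₀ (norm_nonneg _) (norm_nonneg _) two_ne_zero, Complex.sq_norm,
    Complex.sq_norm, Complex.normSq_apply, Complex.normSq_apply]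
  simp only [Complex.sub_re, Complex.sub_im, Complex.add_re, Complex.add_im, Complex.one_re,
    Complex.one_im]
  constructor <;> intro h <;> nlinarith

theorem HasSum.nat_succ {G : Type*} [AddCommGroup G] [TopologicalSpace G]
    [IsTopologicalAddGroup G] {f : ℕ → G} {g : G} (h : HasSum f g) : HasSum (fun n => f (n + 1)) (g - f 0) := by
  simpa using (hasSum_nat_add_iff' 1).2 h

theorem norm_add_norm_le_of_hasSum {E : Type*} [NormedAddCommGroup E] {x y : ℕ → E} {X Y : E}
    {w : ℕ → ℝ} (hx : HasSum x X) (hy : HasSum y Y) (hw : Summable w)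
    (hxy : ∀ n, ‖x n‖ + ‖y n‖ ≤ w n) : ‖X‖ + ‖Y‖ ≤ ∑' n, w n := by
  have hx' : Summable fun n => ‖x n‖ :=
    hw.of_nonneg_of_le (fun n => norm_nonneg _) fun n => by linarith [hxy n, norm_nonneg (y n)]
  have hy' : Summable fun n => ‖y n‖ :=
    hw.of_nonneg_of_le (fun n => norm_nonneg _) fun n => by linarith [hxy n, norm_nonneg (x n)]
  calc ‖X‖ + ‖Y‖ ≤ ∑' n, ‖x n‖ + ∑' n, ‖y n‖ := by
        rw [← hx.tsum_eq, ← hy.tsum_eq]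
        exact add_le_add (norm_tsum_le_tsum_norm hx') (norm_tsum_le_tsum_norm hy')
    _ = ∑' n, (‖x n‖ + ‖y n‖) := (hx'.tsum_add hy').symm
    _ ≤ ∑' n, w n := (hx'.add hy').tsum_le_tsum hxy hw

section Weights

variable {E : Type*} [SeminormedAddCommGroup E]

noncomputable def weightedCoeff (b : ℕ → E) (n : ℕ) : ℝ := (max n 1 : ℕ) * ‖b (n + 1)‖

theorem summable_weightedCoeff {b : ℕ → E}
    (h : Summable fun n : ℕ => ((n + 1 : ℕ) : ℝ) * ‖b (n + 2)‖) : Summable (weightedCoeff b) :=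
  (summable_nat_add_iff 1).1 (by simpa [weightedCoeff] using h)

theorem tsum_weightedCoeff {b : ℕ → E}
    (h : Summable fun n : ℕ => ((n + 1 : ℕ) : ℝ) * ‖b (n + 2)‖) :
    ∑' n, weightedCoeff b n = ‖b 1‖ + ∑' n : ℕ, ((n + 1 : ℕ) : ℝ) * ‖b (n + 2)‖ := by
  rw [(summable_weightedCoeff h).tsum_eq_zero_add]
  simp [weightedCoeff]

theorem summable_nat_mul_norm_of_summable_weightedCoeff {b : ℕ → E}
    (h : Summable (weightedCoeff b)) : Summable fun n : ℕ => (n : ℝ) * ‖b n‖ := by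
  refine (summable_nat_add_iff 1).1 ((h.mul_left 2).of_nonneg_of_le (fun n => by positivity)
    fun n => ?_)
  rw [weightedCoeff, ← mul_assoc]
  gcongr
  exact_mod_cast (by omega : n + 1 ≤ 2 * max n 1)

end Weights

theorem norm_coeff_mul_deriv_pow_le (b : ℕ → ℂ) (n : ℕ) {y : ℂ} (hy : ‖y‖ ≤ 1) :
    ‖b n * (n * y ^ (n - 1))‖ ≤ n * ‖b n‖ := by
  rw [norm_mul, norm_mul, norm_pow, Complex.norm_natCast, mul_comm]
  gcongr
  exact mul_le_of_le_one_right (Nat.cast_nonneg n) (pow_le_one₀ (norm_nonneg y) hy)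

section PowerSeries

variable {b : ℕ → ℂ} {φ : ℂ → ℂ}

theorem hasDerivAt_of_forall_hasSum
    (hφ : ∀ z ∈ ball (0 : ℂ) 1, HasSum (fun n => b n * z ^ n) (φ z))
    (hb : Summable fun n : ℕ => (n : ℝ) * ‖b n‖) {z : ℂ} (hz : z ∈ ball (0 : ℂ) 1) :
    HasDerivAt φ (∑' n : ℕ, b n * (n * z ^ (n - 1))) z := by
  have hbound : ∀ n, ∀ y ∈ ball (0 : ℂ) 1, ‖b n * (n * y ^ (n - 1))‖ ≤ n * ‖b n‖ :=
    fun n y hy => norm_coeff_mul_deriv_pow_le b n (mem_ball_zero_iff.1 hy).le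
  have hseries := hasDerivAt_tsum_of_isPreconnected hb isOpen_ball
    (convex_ball (0 : ℂ) 1).isPreconnected (fun n y _ => (hasDerivAt_pow n y).const_mul (b n))
    hbound (mem_ball_self one_pos) (hφ 0 (mem_ball_self one_pos)).summable hz
  refine hseries.congr_of_eventuallyEq ?_
  filter_upwards [isOpen_ball.mem_nhds hz] with y hy
  exact (hφ y hy).tsum_eq.symm

theorem hasSum_mul_deriv_of_forall_hasSum
    (hφ : ∀ z ∈ ball (0 : ℂ) 1, HasSum (fun n => b n * z ^ n) (φ z))
    (hb : Summable fun n : ℕ => (n : ℝ) * ‖b n‖) {z : ℂ} (hz : z ∈ ball (0 : ℂ) 1) :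
    HasSum (fun n : ℕ => (n : ℂ) * b n * z ^ n) (z * deriv φ z) := by
  rw [(hasDerivAt_of_forall_hasSum hφ hb hz).deriv]
  have hsum : Summable fun n : ℕ => b n * (n * z ^ (n - 1)) :=
    .of_norm_bounded hb fun n => norm_coeff_mul_deriv_pow_le b n (mem_ball_zero_iff.1 hz).le
  have hterm : (fun n : ℕ => z * (b n * (n * z ^ (n - 1)))) =
      fun n : ℕ => (n : ℂ) * b n * z ^ n := by
    funext n
    rcases n with _ | n
    · simp
    · rw [Nat.add_sub_cancel, pow_succ]
      ring
  exact hterm ▸ hsum.hasSum.mul_left z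

end PowerSeries

theorem mul_deriv_div_self_div {φ : ℂ → ℂ} {D z : ℂ} (hφ : HasDerivAt φ D z) (hφz : φ z ≠ 0)
    (hz : z ≠ 0) : z * deriv (fun w => w / φ w) z / (z / φ z) = 1 - z * D / φ z := by
  have hdiv : HasDerivAt (fun w => w / φ w) ((1 * φ z - z * D) / φ z ^ 2) z :=
    (hasDerivAt_id z).div hφ hφz
  rw [hdiv.deriv]
  field_simp

theorem re_one_sub_div_pos {X Φ : ℂ} (hΦ : Φ ≠ 0) (h : ‖X‖ < ‖2 * Φ - X‖) :
    0 < (1 - X / Φ).re := by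
  rw [← Complex.norm_sub_one_lt_norm_add_one_iff]
  have hm : 1 - X / Φ - 1 = -X / Φ := by ring
  have hp : 1 - X / Φ + 1 = (2 * Φ - X) / Φ := by field_simp; ring
  rw [hm, hp, norm_div, norm_div, norm_neg]
  exact div_lt_div_of_pos_right h (norm_pos_iff.2 hΦ)

section Coefficients

variable {b : ℕ → ℂ}

theorem norm_natCast_succ_add_norm_two_sub (n : ℕ) :
    ‖((n + 1 : ℕ) : ℂ)‖ + ‖(2 : ℂ) - (n + 1 : ℕ)‖ = 2 * (max n 1 : ℕ) := by
  rcases n with _ | n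
  · norm_num
  · have h : (2 : ℂ) - (n + 1 + 1 : ℕ) = -(n : ℂ) := by push_cast; ring
    rw [h, norm_neg, Complex.norm_natCast, Complex.norm_natCast]
    push_cast [Nat.max_eq_left (Nat.le_add_left 1 n)]
    ring

theorem norm_lt_norm_two_mul_sub (hb0 : b 0 = 1) (hc : Summable (weightedCoeff b))
    (hc1 : ∑' n, weightedCoeff b n ≤ 1) {z Φ X : ℂ} (hz : ‖z‖ < 1)
    (hΦ : HasSum (fun n => b n * z ^ n) Φ) (hX : HasSum (fun n : ℕ => (n : ℂ) * b n * z ^ n) X) :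
    ‖X‖ < ‖2 * Φ - X‖ := by
  have hY : HasSum (fun n : ℕ => (2 - n : ℂ) * b n * z ^ n) (2 * Φ - X) := by
    have hterm : (fun n : ℕ => 2 * (b n * z ^ n) - n * b n * z ^ n) =
        fun n : ℕ => (2 - n : ℂ) * b n * z ^ n := by
      funext n; ring
    exact hterm ▸ (hΦ.mul_left 2).sub hX
  have hterm : ∀ n : ℕ, ‖((n + 1 : ℕ) : ℂ) * b (n + 1) * z ^ (n + 1)‖ +
      ‖(2 - (n + 1 : ℕ) : ℂ) * b (n + 1) * z ^ (n + 1)‖ ≤ 2 * ‖z‖ * weightedCoeff b n := by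
    intro n
    simp only [norm_mul, norm_pow]
    rw [← add_mul, ← add_mul, norm_natCast_succ_add_norm_two_sub, weightedCoeff, pow_succ]
    have hzn : ‖z‖ ^ n ≤ 1 := pow_le_one₀ (norm_nonneg z) hz.le
    have : 0 ≤ 2 * ((max n 1 : ℕ) : ℝ) * ‖b (n + 1)‖ * ‖z‖ := by positivity
    nlinarith
  have hsum := norm_add_norm_le_of_hasSum hX.nat_succ hY.nat_succ (hc.mul_left (2 * ‖z‖)) hterm
  simp only [hb0, Nat.cast_zero, sub_zero, pow_zero, mul_one, tsum_mul_left] at hsum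
  have hlt : 2 * ‖z‖ * ∑' n, weightedCoeff b n < 2 :=
    calc 2 * ‖z‖ * ∑' n, weightedCoeff b n ≤ 2 * ‖z‖ * 1 := by gcongr
      _ < 2 := by linarith
  have htri := norm_le_norm_add_norm_sub (2 * Φ - X) (2 : ℂ)
  rw [Complex.norm_two] at htri
  linarith

theorem eq_of_mul_eq_mul_of_hasSum (hb0 : b 0 = 1) (hc : Summable (weightedCoeff b))
    (hc1 : ∑' n, weightedCoeff b n ≤ 1) {z w Φz Φw : ℂ} (hz : ‖z‖ < 1) (hw : ‖w‖ < 1)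
    (hΦz : HasSum (fun n => b n * z ^ n) Φz) (hΦw : HasSum (fun n => b n * w ^ n) Φw)
    (h : z * Φw = w * Φz) : z = w := by
  set t : ℕ → ℂ := fun n => b n * (z * w ^ n - w * z ^ n)
  have ht : HasSum t 0 := by
    have hterm : (fun n => z * (b n * w ^ n) - w * (b n * z ^ n)) = t := by
      funext n; ring
    simpa [h, hterm] using (hΦw.mul_left z).sub (hΦz.mul_left w)
  have hterm : ∀ n, ‖t (n + 1)‖ ≤ weightedCoeff b n * (‖z‖ * ‖w‖ * ‖w - z‖) := by
    intro n
    have hfac : t (n + 1) = b (n + 1) * (z * w * (w ^ n - z ^ n)) := by simp only [t]; ring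
    rw [hfac, norm_mul, norm_mul, norm_mul, weightedCoeff]
    calc ‖b (n + 1)‖ * (‖z‖ * ‖w‖ * ‖w ^ n - z ^ n‖)
        ≤ ‖b (n + 1)‖ * (‖z‖ * ‖w‖ * (n * ‖w - z‖)) := by
          gcongr; exact norm_pow_sub_pow_le hw.le hz.le n
      _ ≤ ‖b (n + 1)‖ * (‖z‖ * ‖w‖ * ((max n 1 : ℕ) * ‖w - z‖)) := by
          gcongr; exact_mod_cast le_max_left n 1
      _ = _ := by ring
  have hbound := tsum_of_norm_bounded (hc.hasSum.mul_right _) hterm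
  have ht0 : t 0 = z - w := by simp [t, hb0]
  rw [ht.nat_succ.tsum_eq, ht0, zero_sub, norm_neg, norm_sub_rev] at hbound
  have hzw : ‖z‖ * ‖w‖ < 1 := by nlinarith [norm_nonneg z, norm_nonneg w]
  have : ‖w - z‖ ≤ ‖z‖ * ‖w‖ * ‖w - z‖ :=
    hbound.trans (mul_le_of_le_one_left (by positivity) hc1)
  have : ‖w - z‖ = 0 := by nlinarith [norm_nonneg (w - z)]
  exact (sub_eq_zero.1 (norm_eq_zero.1 this)).symm

end Coefficients

/-- If `φ(z) = 1 + ∑_{n≥1} b_n zⁿ` is analytic and non-vanishing on the unit disk and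
`∑_{n≥2} (n-1)|b_n| ≤ 1 - |b₁|`, then `f(z) = z/φ(z)` is starlike: it is injective on
the disk and `Re(z f'(z)/f(z)) > 0` for `z ≠ 0` in the disk. -/
theorem stmt10 (b : ℕ → ℂ) (φ : ℂ → ℂ) (hb0 : b 0 = 1)
    (hφ : ∀ z ∈ Metric.ball (0 : ℂ) 1, HasSum (fun n : ℕ => b n * z ^ n) (φ z))
    (hφ0 : ∀ z ∈ Metric.ball (0 : ℂ) 1, φ z ≠ 0)
    (hsum : Summable (fun n : ℕ => ((n + 1 : ℕ) : ℝ) * ‖b (n + 2)‖))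
    (hle : ∑' n : ℕ, ((n + 1 : ℕ) : ℝ) * ‖b (n + 2)‖ ≤ 1 - ‖b 1‖) :
    Set.InjOn (fun z => z / φ z) (Metric.ball (0 : ℂ) 1) ∧
    ∀ z ∈ Metric.ball (0 : ℂ) 1, z ≠ 0 →
      0 < (z * deriv (fun w => w / φ w) z / (z / φ z)).re := by
  have hc := summable_weightedCoeff hsum
  have hc1 : ∑' n, weightedCoeff b n ≤ 1 := by rw [tsum_weightedCoeff hsum]; linarith
  have hb := summable_nat_mul_norm_of_summable_weightedCoeff hc
  refine ⟨fun z hz w hw hzw => ?_, fun z hz hz0 => ?_⟩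
  · exact eq_of_mul_eq_mul_of_hasSum hb0 hc hc1 (mem_ball_zero_iff.1 hz)
      (mem_ball_zero_iff.1 hw) (hφ z hz) (hφ w hw)
      ((div_eq_div_iff (hφ0 z hz) (hφ0 w hw)).1 hzw)
  · have hd := (hasDerivAt_of_forall_hasSum hφ hb hz).differentiableAt.hasDerivAt
    rw [mul_deriv_div_self_div hd (hφ0 z hz) hz0]
    exact re_one_sub_div_pos (hφ0 z hz) (norm_lt_norm_two_mul_sub hb0 hc hc1
      (mem_ball_zero_iff.1 hz) (hφ z hz) (hasSum_mul_deriv_of_forall_hasSum hφ hb hz))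
end

section
/- Let f belong to the class U, and write z/f(z) = 1 + \sum_{n=1}^{\infty} b_n z^n for z \in D (this expansion exists since z/f(z) is analytic and non-vanishing on D with value 1 at 0). Then \sum_{n=2}^{\infty} (n-1)^2 |b_n|^2 \le 1. -/
/-!
Write `g(z) = z / f(z) = ∑ bₙ zⁿ`. Since `f' (z/f)² = g - z g'`, the bounded function
`h(z) = f'(z) (z/f(z))² - 1` has the power series `∑ cₙ zⁿ` with `cₙ = (1 - n) bₙ - [n = 0]`.
On the circle `|z| = r < 1` the numbers `cₙ rⁿ` are the Fourier coefficients of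
`θ ↦ h(r e^{iθ})`, so Bessel's inequality in `L²` of the circle gives `∑ |cₙ|² r²ⁿ ≤ sup |h|² ≤ 1`.
Letting `r → 1` gives `∑ |cₙ|² ≤ 1`, and for `n ≥ 2` the terms are `(n - 1)² |bₙ|²`.
-/

open MeasureTheory AddCircle Metric Filter Topology

theorem Orthonormal.inner_right_hasSum {𝕜 E ι : Type*} [RCLike 𝕜] [NormedAddCommGroup E]
    [InnerProductSpace 𝕜 E] {v : ι → E} (hv : Orthonormal 𝕜 v) {l : ι → 𝕜} {x : E}
    (hx : HasSum (fun i => l i • v i) x) (i : ι) : inner 𝕜 (v i) x = l i := by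
  classical
  have h := hx.mapL (innerSL 𝕜 (v i))
  simp only [innerSL_apply_apply, inner_smul_right, orthonormal_iff_ite.mp hv, mul_ite, mul_one,
    mul_zero] at h
  exact h.unique (hasSum_ite_eq i (l i) |>.congr_fun fun j => by grind)

theorem summable_pow_mul_norm_mul_pow {𝕜 : Type*} [NormedField 𝕜] {b : ℕ → 𝕜} {t : 𝕜}
    (ht : Summable fun n => b n * t ^ n) (k : ℕ) {r : ℝ} (hr0 : 0 ≤ r) (hr : r < ‖t‖) :
    Summable fun n : ℕ => (n : ℝ) ^ k * ‖b n‖ * r ^ n := by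
  have ht0 : 0 < ‖t‖ := hr0.trans_lt hr
  obtain ⟨C, hC⟩ := ht.tendsto_atTop_zero.norm.bddAbove_range
  have hgeom := summable_pow_mul_geometric_of_norm_lt_one (R := ℝ) k (r := r / ‖t‖)
    (by rwa [Real.norm_of_nonneg (by positivity), div_lt_one ht0])
  refine .of_nonneg_of_le (fun n => by positivity) (fun n => ?_) (hgeom.mul_left C)
  have hbn : ‖b n‖ * ‖t‖ ^ n ≤ C := by simpa using hC ⟨n, rfl⟩
  calc (n : ℝ) ^ k * ‖b n‖ * r ^ n = (‖b n‖ * ‖t‖ ^ n) * ((n : ℝ) ^ k * (r / ‖t‖) ^ n) := by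
        rw [div_pow]
        field_simp
    _ ≤ C * ((n : ℝ) ^ k * (r / ‖t‖) ^ n) := by gcongr

theorem hasDerivAt_tsum_mul_pow {𝕜 : Type*} [RCLike 𝕜] {b : ℕ → 𝕜} {t z : 𝕜}
    (ht : Summable fun n => b n * t ^ n) (hz : ‖z‖ < ‖t‖) :
    HasDerivAt (fun w => ∑' n, b n * w ^ n) (∑' n, b n * (n * z ^ (n - 1))) z := by
  set ρ := (‖z‖ + ‖t‖) / 2 with hρ
  have hzρ : ‖z‖ < ρ := by linarith
  have hρt : ρ < ‖t‖ := by linarith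
  have hρ0 : 0 < ρ := (norm_nonneg z).trans_lt hzρ
  have hu := (summable_pow_mul_norm_mul_pow ht 1 hρ0.le hρt).div_const ρ
  refine hasDerivAt_tsum_of_isPreconnected hu isOpen_ball (convex_ball 0 ρ).isPreconnected
    (fun (n : ℕ) w _ => (hasDerivAt_pow n w).const_mul (b n)) (fun n w hw => ?_)
    (mem_ball_zero_iff.2 hzρ) ?_ (mem_ball_zero_iff.2 hzρ)
  · have hw : ‖w‖ ≤ ρ := (mem_ball_zero_iff.1 hw).le
    rcases n with _ | n
    · simp
    · simp only [norm_mul, norm_pow, add_tsub_cancel_right, RCLike.norm_natCast]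
      calc ‖b (n + 1)‖ * ((n + 1 : ℕ) * ‖w‖ ^ n) ≤ ‖b (n + 1)‖ * ((n + 1 : ℕ) * ρ ^ n) := by
            gcongr
        _ = ((n + 1 : ℕ) : ℝ) ^ 1 * ‖b (n + 1)‖ * ρ ^ (n + 1) / ρ := by field_simp; ring
  · exact .of_norm <| by
      simpa [norm_mul, norm_pow] using summable_pow_mul_norm_mul_pow ht 0 (norm_nonneg z) hz

theorem hasSum_natCast_mul_mul_pow {𝕜 : Type*} [RCLike 𝕜] {b : ℕ → 𝕜} {t z : 𝕜}
    (ht : Summable fun n => b n * t ^ n) (hz : ‖z‖ < ‖t‖) :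
    HasSum (fun n => n * b n * z ^ n) (z * deriv (fun w => ∑' n, b n * w ^ n) z) := by
  have hs : Summable fun n : ℕ => n * b n * z ^ n := .of_norm <| by
    simpa [norm_mul, norm_pow] using summable_pow_mul_norm_mul_pow ht 1 (norm_nonneg z) hz
  have hterm : ∀ n : ℕ, z * (b n * (n * z ^ (n - 1))) = n * b n * z ^ n := by
    rintro (_ | n)
    · simp
    · rw [add_tsub_cancel_right, pow_succ]
      ring
  rw [(hasDerivAt_tsum_mul_pow ht hz).deriv, ← tsum_mul_left]
  simpa only [hterm] using hs.hasSum

theorem deriv_mul_div_sq {𝕜 : Type*} [NontriviallyNormedField 𝕜] {f : 𝕜 → 𝕜} {z : 𝕜}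
    (hf : DifferentiableAt 𝕜 f z) (hfz : f z ≠ 0) :
    deriv f z * (z / f z) ^ 2 = z / f z - z * deriv (fun w => w / f w) z := by
  rw [((hasDerivAt_id' z).fun_div hf.hasDerivAt hfz).deriv]
  field_simp
  ring

theorem sum_sq_norm_mul_pow_le_of_norm_tsum_le {c : ℕ → ℂ} {r M : ℝ} (hr : 0 ≤ r)
    (hc : Summable fun n => ‖c n‖ * r ^ n)
    (hM : ∀ z : ℂ, ‖z‖ = r → ‖∑' n, c n * z ^ n‖ ≤ M) (s : Finset ℕ) :
    ∑ n ∈ s, ‖c n‖ ^ 2 * r ^ (2 * n) ≤ M ^ 2 := by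
  have hM0 : 0 ≤ M := (norm_nonneg _).trans (hM r (by simp [abs_of_nonneg hr]))
  let u : ℕ → C(AddCircle (1 : ℝ), ℂ) := fun n => (c n * r ^ n) • fourier n
  have hu : Summable u := .of_norm_bounded hc fun n => by
    simp [u, norm_smul, fourier_norm, abs_of_nonneg hr]
  set F := ∑' n, u n
  have hF : ‖F‖ ≤ M := by
    refine (F.norm_le hM0).2 fun x => ?_
    have hux : ∀ n, u n x = c n * (r * toCircle x) ^ n := fun n => by
      simp [u, fourier_apply, mul_pow, toCircle_nsmul, mul_assoc]
    rw [← ContinuousMap.tsum_apply hu]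
    simp only [hux]
    exact hM _ (by simp [abs_of_nonneg hr, Circle.norm_coe])
  have hL : HasSum (fun n : ℕ => (c n * r ^ n) • fourierLp 2 (n : ℤ))
      (F.toLp 2 haarAddCircle ℂ) := by
    simpa [u] using (ContinuousMap.toLp 2 haarAddCircle ℂ).hasSum hu.hasSum
  have hFL : ‖F.toLp 2 haarAddCircle ℂ‖ ≤ M := by
    have := Lp.norm_le_of_ae_bound (f := F.toLp 2 haarAddCircle ℂ) hM0 ?_
    · simpa [measureUnivNNReal] using this
    filter_upwards [ContinuousMap.coeFn_toLp (p := 2) (𝕜 := ℂ) haarAddCircle F] with x hx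
    rw [hx]
    exact F.norm_coe_le_norm x |>.trans hF
  have hv : Orthonormal ℂ fun n : ℕ => fourierLp (T := 1) 2 (n : ℤ) :=
    orthonormal_fourier.comp _ Nat.cast_injective
  calc ∑ n ∈ s, ‖c n‖ ^ 2 * r ^ (2 * n)
      = ∑ n ∈ s, ‖inner ℂ (fourierLp 2 (n : ℤ)) (F.toLp 2 haarAddCircle ℂ)‖ ^ 2 := by
        refine Finset.sum_congr rfl fun n _ => ?_
        rw [hv.inner_right_hasSum hL n]
        simp [mul_pow, ← pow_mul, abs_of_nonneg hr, mul_comm 2 n]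
    _ ≤ ‖F.toLp 2 haarAddCircle ℂ‖ ^ 2 := hv.sum_inner_products_le _
    _ ≤ M ^ 2 := by gcongr

theorem sum_sq_norm_le_of_hasSum_of_norm_le {c : ℕ → ℂ} {h : ℂ → ℂ} {M : ℝ}
    (hc : ∀ z ∈ ball (0 : ℂ) 1, z ≠ 0 → HasSum (fun n => c n * z ^ n) (h z))
    (hM : ∀ z ∈ ball (0 : ℂ) 1, z ≠ 0 → ‖h z‖ ≤ M) (s : Finset ℕ) :
    ∑ n ∈ s, ‖c n‖ ^ 2 ≤ M ^ 2 := by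
  have hclosed : IsClosed {r : ℝ | ∑ n ∈ s, ‖c n‖ ^ 2 * r ^ (2 * n) ≤ M ^ 2} :=
    isClosed_le (by fun_prop) continuous_const
  have hr : ∀ r ∈ Set.Ioo (0 : ℝ) 1, ∑ n ∈ s, ‖c n‖ ^ 2 * r ^ (2 * n) ≤ M ^ 2 := by
    rintro r ⟨hr0, hr1⟩
    obtain ⟨t, hrt, ht1⟩ := exists_between hr1
    have ht : ‖(t : ℂ)‖ = t := by simp [abs_of_pos (hr0.trans hrt)]
    have htmem : (t : ℂ) ∈ ball (0 : ℂ) 1 := mem_ball_zero_iff.2 (by rwa [ht])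
    have ht0 : (t : ℂ) ≠ 0 := by exact_mod_cast (hr0.trans hrt).ne'
    refine sum_sq_norm_mul_pow_le_of_norm_tsum_le hr0.le ?_ (fun z hz => ?_) s
    · simpa using summable_pow_mul_norm_mul_pow (hc t htmem ht0).summable 0 hr0.le (by rwa [ht])
    · have hz1 : z ∈ ball (0 : ℂ) 1 := mem_ball_zero_iff.2 (hz ▸ hr1)
      have hz0 : z ≠ 0 := norm_pos_iff.1 (hz ▸ hr0)
      rw [(hc z hz1 hz0).tsum_eq]
      exact hM z hz1 hz0
  have h1 : (1 : ℝ) ∈ closure (Set.Ioo 0 1) := by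
    rw [closure_Ioo zero_ne_one]
    exact ⟨zero_le_one, le_rfl⟩
  simpa using hclosed.closure_subset_iff.2 hr h1

theorem hasSum_one_sub_mul_mul_pow {f : ℂ → ℂ} {b : ℕ → ℂ}
    (hf : DifferentiableOn ℂ f (ball 0 1)) (hf0 : ∀ z ∈ ball (0 : ℂ) 1, z ≠ 0 → f z ≠ 0)
    (hb : ∀ z ∈ ball (0 : ℂ) 1, z ≠ 0 → HasSum (fun n => b n * z ^ n) (z / f z))
    {z : ℂ} (hz : z ∈ ball 0 1) (hz0 : z ≠ 0) :
    HasSum (fun n => (1 - n) * b n * z ^ n) (deriv f z * (z / f z) ^ 2) := by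
  have hpunct : IsOpen (ball (0 : ℂ) 1 \ {0}) := isOpen_ball.sdiff isClosed_singleton
  have heq : (fun w => w / f w) =ᶠ[𝓝 z] fun w => ∑' n, b n * w ^ n := by
    filter_upwards [hpunct.mem_nhds ⟨hz, hz0⟩] with w ⟨hw, hw0⟩
    exact (hb w hw hw0).tsum_eq.symm
  obtain ⟨t, hzt, ht1⟩ := exists_between (mem_ball_zero_iff.1 hz)
  have ht0 : 0 < t := (norm_nonneg z).trans_lt hzt
  have ht : ‖(t : ℂ)‖ = t := by simp [abs_of_pos ht0]
  have hsum := (hb t (mem_ball_zero_iff.2 (by rwa [ht])) (by exact_mod_cast ht0.ne')).summable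
  have hderiv := hasSum_natCast_mul_mul_pow (z := z) hsum (by rwa [ht])
  rw [deriv_mul_div_sq (hf.differentiableAt (isOpen_ball.mem_nhds hz)) (hf0 z hz hz0),
    heq.deriv_eq]
  simpa only [sub_mul, one_mul] using (hb z hz hz0).sub hderiv

theorem stmt11_general (f : ℂ → ℂ) (hf : ClassU f) (b : ℕ → ℂ)
    (hrep : ∀ z ∈ Metric.ball (0 : ℂ) 1, z ≠ 0 →
      HasSum (fun n : ℕ => b n * z ^ n) (z / f z)) :
    Summable (fun n : ℕ => ((n + 1 : ℕ) : ℝ) ^ 2 * ‖b (n + 2)‖ ^ 2) ∧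
      ∑' n : ℕ, ((n + 1 : ℕ) : ℝ) ^ 2 * ‖b (n + 2)‖ ^ 2 ≤ 1 := by
  obtain ⟨hd, -, -, hne, hlt⟩ := hf
  set c : ℕ → ℂ := fun n => (1 - n) * b n - if n = 0 then 1 else 0
  have hc : ∀ z ∈ ball (0 : ℂ) 1, z ≠ 0 →
      HasSum (fun n => c n * z ^ n) (deriv f z * (z / f z) ^ 2 - 1) := fun z hz hz0 => by
    have h1 : HasSum (fun n => (if n = 0 then 1 else 0) * z ^ n) (1 : ℂ) :=
      (hasSum_ite_eq 0 (1 : ℂ)).congr_fun fun n => by split_ifs <;> simp [*]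
    simpa only [c, sub_mul] using (hasSum_one_sub_mul_mul_pow hd hne hrep hz hz0).sub h1
  have hfin := sum_sq_norm_le_of_hasSum_of_norm_le hc (fun z hz hz0 => (hlt z hz hz0).le)
  have hsum : Summable fun n => ‖c n‖ ^ 2 := summable_of_sum_le (fun n => by positivity) hfin
  have hshift : ∀ n : ℕ, ‖c (n + 2)‖ ^ 2 = ((n + 1 : ℕ) : ℝ) ^ 2 * ‖b (n + 2)‖ ^ 2 := fun n => by
    have h : (1 - ((n + 2 : ℕ) : ℂ)) = -((n + 1 : ℕ) : ℂ) := by push_cast; ring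
    simp only [c, h, Nat.add_eq_zero_iff, two_ne_zero, and_false, if_false, sub_zero, norm_mul,
      norm_neg, Complex.norm_natCast, mul_pow]
  simp only [← hshift]
  refine ⟨hsum.comp_injective (add_left_injective 2), ?_⟩
  calc ∑' n : ℕ, ‖c (n + 2)‖ ^ 2 ≤ ∑' n, ‖c n‖ ^ 2 :=
        tsum_comp_le_tsum_of_inj hsum (fun n => by positivity) (add_left_injective 2)
    _ ≤ 1 := by simpa using Real.tsum_le_of_sum_le (fun n => by positivity) hfin

/-- If `f ∈ U` and `z/f(z) = 1 + ∑_{n≥1} b_n zⁿ` on the unit disk, then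
`∑_{n≥2} (n-1)² |b_n|² ≤ 1`. -/
theorem stmt11 (f : ℂ → ℂ) (hf : ClassU f) (b : ℕ → ℂ) (hb0 : b 0 = 1)
    (hrep : ∀ z ∈ Metric.ball (0 : ℂ) 1, z ≠ 0 →
      HasSum (fun n : ℕ => b n * z ^ n) (z / f z)) :
    Summable (fun n : ℕ => ((n + 1 : ℕ) : ℝ) ^ 2 * ‖b (n + 2)‖ ^ 2) ∧
      ∑' n : ℕ, ((n + 1 : ℕ) : ℝ) ^ 2 * ‖b (n + 2)‖ ^ 2 ≤ 1 :=
  stmt11_general f hf b hrep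
end

section
/- Let f belong to the class U and suppose f''(0) = 0. Then Re( f(z)/z ) > 1/2 for all z in the unit disk D with z \ne 0 (equivalently, for all z \in D with the convention f(z)/z = 1 at z = 0). -/
/-!
Write `g = z / f`, extended by `g 0 = 1`; in Lean this is `(dslope f 0)⁻¹`. A direct computation
gives `g - z g' - 1 = f' (z / f)² - 1`, so `ω := g - z g' - 1` maps the disk into itself, and
`ω 0 = ω' 0 = 0`. The Schwarz lemma for a double zero gives `|ω z| ≤ |z|²`. With
`h := g - 1 - g'(0) z` one has `(h / z)' = -ω / z²`, so `h / z` is `1`-Lipschitz and vanishes at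
`0`, whence `|g z - 1 + (f''(0)/2) z| ≤ |z|²`. If `f''(0) = 0` this puts `z / f z` in the disk of
centre `1` and radius `1`, i.e. `Re (f z / z) > 1/2`.
-/

open Metric Set Complex Filter Topology

lemma norm_le_sq_of_mapsTo_ball_of_deriv_eq_zero {ω : ℂ → ℂ}
    (hd : DifferentiableOn ℂ ω (ball 0 1)) (hmaps : MapsTo ω (ball 0 1) (closedBall 0 1))
    (h₀ : ω 0 = 0) (h₁ : deriv ω 0 = 0) {z : ℂ} (hz : z ∈ ball (0 : ℂ) 1) :
    ‖ω z‖ ≤ ‖z‖ ^ 2 := by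
  have ho : (ω · - ω 0) =o[𝓝 0] (fun w ↦ ‖w - 0‖ ^ 1) := by
    have := (hd.differentiableAt (ball_mem_nhds 0 one_pos)).hasDerivAt
    rw [h₁, hasDerivAt_iff_isLittleO] at this
    simpa using this.norm_right
  have key := Complex.dist_le_mul_div_pow_of_mapsTo_ball_of_isLittleO hd (by rwa [h₀]) ho hz
  simp only [h₀, dist_zero_right, div_one] at key
  exact key.trans_eq (by ring)

lemma deriv_dslope_mul_sq {h : ℂ → ℂ} {a w : ℂ} (hd : DifferentiableAt ℂ h w) (hw : w ≠ a) :
    deriv (dslope h a) w * (w - a) ^ 2 = (w - a) * deriv h w - (h w - h a) := by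
  have hev : dslope h a =ᶠ[𝓝 w] fun x ↦ (h x - h a) / (x - a) := by
    filter_upwards [isOpen_ne.mem_nhds hw] with x hx
    rw [dslope_of_ne _ hx, slope_def_field]
  have hsub : w - a ≠ 0 := sub_ne_zero.mpr hw
  have hder : HasDerivAt (fun x ↦ (h x - h a) / (x - a))
      ((deriv h w * (w - a) - (h w - h a) * 1) / (w - a) ^ 2) w :=
    (hd.hasDerivAt.sub_const (h a)).div ((hasDerivAt_id' w).sub_const a) hsub
  rw [hev.deriv_eq, hder.deriv]
  field_simp

lemma norm_deriv_dslope_le_one {h : ℂ → ℂ} (hd : DifferentiableOn ℂ h (ball 0 1)) (h₀ : h 0 = 0)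
    (hω : ∀ z ∈ ball (0 : ℂ) 1, ‖h z - z * deriv h z‖ ≤ ‖z‖ ^ 2) :
    ∀ z ∈ ball (0 : ℂ) 1, ‖deriv (dslope h 0) z‖ ≤ 1 := by
  have hm : DifferentiableOn ℂ (dslope h 0) (ball 0 1) :=
    (differentiableOn_dslope (ball_mem_nhds 0 one_pos)).mpr hd
  have off_zero : ∀ w ∈ ball (0 : ℂ) 1, w ≠ 0 → ‖deriv (dslope h 0) w‖ ≤ 1 := by
    intro w hw hw0
    have hmul := deriv_dslope_mul_sq (hd.differentiableAt (isOpen_ball.mem_nhds hw)) hw0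
    rw [sub_zero, h₀, sub_zero] at hmul
    refine le_of_mul_le_mul_right ?_ (by positivity : 0 < ‖w‖ ^ 2)
    calc ‖deriv (dslope h 0) w‖ * ‖w‖ ^ 2 = ‖h w - w * deriv h w‖ := by
          rw [← norm_pow, ← norm_mul, hmul, ← norm_neg]; ring_nf
      _ ≤ 1 * ‖w‖ ^ 2 := (hω w hw).trans_eq (one_mul _).symm
  intro z hz
  rcases eq_or_ne z 0 with rfl | hz0
  · have hcont : ContinuousAt (deriv (dslope h 0)) 0 :=
      ((hm.analyticOnNhd isOpen_ball).deriv 0 hz).continuousAt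
    refine le_of_tendsto (hcont.norm.tendsto.mono_left (nhdsWithin_le_nhds (s := {0}ᶜ))) ?_
    filter_upwards [mem_nhdsWithin_of_mem_nhds (isOpen_ball.mem_nhds hz), self_mem_nhdsWithin]
      with w hw hw0 using off_zero w hw hw0
  · exact off_zero z hz hz0

lemma norm_le_sq_of_norm_sub_mul_deriv_le_sq {h : ℂ → ℂ} (hd : DifferentiableOn ℂ h (ball 0 1))
    (h₀ : h 0 = 0) (h₁ : deriv h 0 = 0)
    (hω : ∀ z ∈ ball (0 : ℂ) 1, ‖h z - z * deriv h z‖ ≤ ‖z‖ ^ 2) {z : ℂ}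
    (hz : z ∈ ball (0 : ℂ) 1) : ‖h z‖ ≤ ‖z‖ ^ 2 := by
  have hm : DifferentiableOn ℂ (dslope h 0) (ball 0 1) :=
    (differentiableOn_dslope (ball_mem_nhds 0 one_pos)).mpr hd
  have hmvt := (convex_ball (0 : ℂ) 1).norm_image_sub_le_of_norm_deriv_le
    (fun x hx ↦ hm.differentiableAt (isOpen_ball.mem_nhds hx))
    (norm_deriv_dslope_le_one hd h₀ hω) (mem_ball_self one_pos) hz
  rw [dslope_same, h₁, sub_zero, sub_zero, one_mul] at hmvt
  have hfactor := sub_smul_dslope h 0 z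
  rw [sub_zero, h₀, sub_zero, smul_eq_mul] at hfactor
  calc ‖h z‖ = ‖z‖ * ‖dslope h 0 z‖ := by rw [← hfactor, norm_mul]
    _ ≤ ‖z‖ ^ 2 := by rw [sq]; gcongr

lemma norm_le_sq_of_norm_sub_mul_deriv_lt_one {h : ℂ → ℂ} (hd : DifferentiableOn ℂ h (ball 0 1))
    (h₀ : h 0 = 0) (h₁ : deriv h 0 = 0)
    (hω : ∀ z ∈ ball (0 : ℂ) 1, ‖h z - z * deriv h z‖ < 1) {z : ℂ}
    (hz : z ∈ ball (0 : ℂ) 1) : ‖h z‖ ≤ ‖z‖ ^ 2 := by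
  have hh' : DifferentiableOn ℂ (deriv h) (ball 0 1) :=
    (hd.analyticOnNhd isOpen_ball).deriv.differentiableOn
  have hω₁ : HasDerivAt (fun w ↦ h w - w * deriv h w)
      (deriv h 0 - (1 * deriv h 0 + 0 * deriv (deriv h) 0)) 0 :=
    (hd.differentiableAt (ball_mem_nhds 0 one_pos)).hasDerivAt.sub
      ((hasDerivAt_id' 0).mul (hh'.differentiableAt (ball_mem_nhds 0 one_pos)).hasDerivAt)
  have hωd : DifferentiableOn ℂ (fun w ↦ h w - w * deriv h w) (ball 0 1) :=
    hd.sub (differentiableOn_id.mul hh')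
  refine norm_le_sq_of_norm_sub_mul_deriv_le_sq hd h₀ h₁ (fun w hw ↦ ?_) hz
  refine norm_le_sq_of_mapsTo_ball_of_deriv_eq_zero hωd
    (fun v hv ↦ mem_closedBall_zero_iff.mpr (hω v hv).le) (by simp [h₀]) ?_ hw
  rw [hω₁.deriv]; ring

lemma norm_sub_one_sub_deriv_mul_le_sq {g : ℂ → ℂ} (hd : DifferentiableOn ℂ g (ball 0 1))
    (h₀ : g 0 = 1) (hω : ∀ z ∈ ball (0 : ℂ) 1, ‖g z - z * deriv g z - 1‖ < 1) {z : ℂ}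
    (hz : z ∈ ball (0 : ℂ) 1) : ‖g z - 1 - deriv g 0 * z‖ ≤ ‖z‖ ^ 2 := by
  have hderiv : ∀ w ∈ ball (0 : ℂ) 1,
      deriv (fun v ↦ g v - 1 - deriv g 0 * v) w = deriv g w - deriv g 0 := fun w hw ↦
    (((hd.differentiableAt (isOpen_ball.mem_nhds hw)).hasDerivAt.sub_const 1).sub
      ((hasDerivAt_id' w).const_mul (deriv g 0))).deriv.trans (by ring)
  refine norm_le_sq_of_norm_sub_mul_deriv_lt_one (h := fun v ↦ g v - 1 - deriv g 0 * v)
    ((hd.sub_const 1).sub (differentiableOn_id.const_mul _)) (by simp [h₀])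
    (by rw [hderiv 0 (mem_ball_self one_pos), sub_self]) (fun w hw ↦ ?_) hz
  rw [hderiv w hw]
  convert hω w hw using 2
  ring

lemma deriv_deriv_eq_two_mul_deriv_dslope {f : ℂ → ℂ} {a : ℂ} (hf : AnalyticAt ℂ f a) :
    deriv (deriv f) a = 2 * deriv (dslope f a) a := by
  set q := dslope f a
  have hq : AnalyticAt ℂ q a := ⟨_, hf.choose_spec.has_fpower_series_dslope_fslope⟩
  have hf_eq : f = fun w ↦ f a + (w - a) * q w := funext fun w ↦ by
    rw [← smul_eq_mul, sub_smul_dslope, add_sub_cancel]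
  have hderiv : deriv f =ᶠ[𝓝 a] fun w ↦ q w + (w - a) * deriv q w := by
    filter_upwards [hq.eventually_analyticAt] with w hw
    rw [hf_eq]
    exact ((((hasDerivAt_id' w).sub_const a).mul hw.differentiableAt.hasDerivAt).const_add
      (f a)).deriv.trans (by ring)
  have h2 : HasDerivAt (fun w ↦ q w + (w - a) * deriv q w)
      (deriv q a + (1 * deriv q a + (a - a) * deriv (deriv q) a)) a :=
    hq.differentiableAt.hasDerivAt.add
      (((hasDerivAt_id' a).sub_const a).mul hq.deriv.differentiableAt.hasDerivAt)
  rw [hderiv.deriv_eq, h2.deriv]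
  ring

lemma one_half_lt_re_of_norm_inv_sub_one_lt_one {w : ℂ} (h : ‖w⁻¹ - 1‖ < 1) : 1 / 2 < w.re := by
  set u := w⁻¹
  have hu : u ≠ 0 := by rintro hu; simp [hu] at h
  have : normSq u < 2 * u.re := by
    have := (sq_lt_one_iff₀ (norm_nonneg _)).mpr h
    rw [← normSq_eq_norm_sq, normSq_apply] at this
    simp only [sub_re, one_re, sub_im, one_im, normSq_apply] at this ⊢
    nlinarith
  have hpos : 0 < normSq u := normSq_pos.mpr hu
  rw [← inv_inv w, inv_re, lt_div_iff₀ hpos]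
  linarith

namespace ClassU

variable {f : ℂ → ℂ}

lemma dslope_ne_zero (hf : ClassU f) : ∀ z ∈ ball (0 : ℂ) 1, dslope f 0 z ≠ 0 := by
  intro z hz
  rcases eq_or_ne z 0 with rfl | hz0
  · simp [hf.2.2.1]
  · rw [dslope_of_ne _ hz0, slope_def_field, hf.2.1, sub_zero, sub_zero]
    exact div_ne_zero (hf.2.2.2.1 z hz hz0) hz0

lemma differentiableOn_inv_dslope (hf : ClassU f) :
    DifferentiableOn ℂ (dslope f 0)⁻¹ (ball 0 1) :=
  ((differentiableOn_dslope (ball_mem_nhds 0 one_pos)).mpr hf.1).inv hf.dslope_ne_zero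

lemma deriv_inv_dslope_zero (hf : ClassU f) :
    deriv (dslope f 0)⁻¹ 0 = -(iteratedDeriv 2 f 0 / 2) := by
  have hq := (differentiableOn_dslope (ball_mem_nhds 0 one_pos)).mpr hf.1
  have hf_an : AnalyticAt ℂ f 0 := hf.1.analyticAt (ball_mem_nhds 0 one_pos)
  rw [((hq.differentiableAt (ball_mem_nhds 0 one_pos)).hasDerivAt.inv
      (hf.dslope_ne_zero 0 (mem_ball_self one_pos))).deriv, iteratedDeriv_succ, iteratedDeriv_one,
    deriv_deriv_eq_two_mul_deriv_dslope hf_an, dslope_same, hf.2.2.1]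
  ring

lemma norm_inv_dslope_sub_mul_deriv_lt_one (hf : ClassU f) :
    ∀ z ∈ ball (0 : ℂ) 1, ‖(dslope f 0)⁻¹ z - z * deriv (dslope f 0)⁻¹ z - 1‖ < 1 := by
  obtain ⟨hd, hf₀, hf₁, hne, hbound⟩ := hf
  intro z hz
  rcases eq_or_ne z 0 with rfl | hz0
  · simp [hf₁]
  have hev : (dslope f 0)⁻¹ =ᶠ[𝓝 z] fun w ↦ w / f w := by
    filter_upwards [isOpen_ne.mem_nhds hz0] with w hw
    rw [Pi.inv_apply, dslope_of_ne _ hw, slope_def_field, hf₀, sub_zero, sub_zero, inv_div]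
  have hfz := hne z hz hz0
  have hder : HasDerivAt (fun w ↦ w / f w) ((1 * f z - z * deriv f z) / f z ^ 2) z :=
    (hasDerivAt_id' z).div (hd.differentiableAt (isOpen_ball.mem_nhds hz)).hasDerivAt hfz
  convert hbound z hz hz0 using 2
  rw [hev.eq_of_nhds, hev.deriv_eq, hder.deriv]
  field_simp
  ring

lemma norm_inv_dslope_sub_one_add_le_sq (hf : ClassU f) {z : ℂ} (hz : z ∈ ball (0 : ℂ) 1) :
    ‖(dslope f 0)⁻¹ z - 1 + iteratedDeriv 2 f 0 / 2 * z‖ ≤ ‖z‖ ^ 2 := by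
  have h := norm_sub_one_sub_deriv_mul_le_sq hf.differentiableOn_inv_dslope
    (by simp [hf.2.2.1]) hf.norm_inv_dslope_sub_mul_deriv_lt_one hz
  rwa [hf.deriv_inv_dslope_zero, neg_mul, sub_neg_eq_add] at h

end ClassU

/-- If `f ∈ U` and `f''(0) = 0`, then `Re(f(z)/z) > 1/2` on the unit disk. -/
theorem stmt18 (f : ℂ → ℂ) (hf : ClassU f) (hf2 : iteratedDeriv 2 f 0 = 0) :
    ∀ z ∈ Metric.ball (0 : ℂ) 1, z ≠ 0 → 1 / 2 < (f z / z).re := by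
  intro z hz hz0
  have hbound := hf.norm_inv_dslope_sub_one_add_le_sq hz
  rw [hf2, zero_div, zero_mul, add_zero, Pi.inv_apply, dslope_of_ne _ hz0, slope_def_field,
    hf.2.1, sub_zero, sub_zero] at hbound
  refine one_half_lt_re_of_norm_inv_sub_one_lt_one (hbound.trans_lt ?_)
  simpa using mem_ball_zero_iff.mp hz
end
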